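/- arXiv:2312.12673 — 7 statements merged into one kernel-verified Lean document; each statement's English description precedes it below -/
import Mathlib

section
/- Let H be a nonempty finite graph, p ∈ (0,1), η ∈ (0,1], and let Y be the random edge-indicator vector of G(n,p) conditioned on the event L_p(H,η). Then for every W ⊆ E(K_n) and every A ⊆ E(K_n)∖W, almost surely E[Y_A | (Y_w)_{w∈W}] ≤ p^{|A|}. -/
open scoped BigOperators

attribute [local instance] Classical.propDecidable

noncomputable section

namespace LowerTails

/-- The edge set of the complete graph `K_n`: unordered pairs of distinct elements of `Fin n`. -/
abbrev Edge (n : ℕ) := {e : Sym2 (Fin n) // ¬ e.IsDiag}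

/-- A graph on `[n]`, identified with its edge-indicator vector in `{0,1}^{E(K_n)}`. -/
abbrev EGraph (n : ℕ) := Edge n → Bool

/-- The probability of the configuration `G` under the product measure where edge `e`
is present independently with probability `q e`. -/
def wt {n : ℕ} (q : Edge n → ℝ) (G : EGraph n) : ℝ :=
  ∏ e : Edge n, if G e then q e else 1 - q e

/-- Probability of the event `S` under `G(n, q)`. -/
def pr {n : ℕ} (q : Edge n → ℝ) (S : Set (EGraph n)) : ℝ :=
  ∑ G : EGraph n, if G ∈ S then wt q G else 0

/-- Conditional probability of `S` given `L` under `G(n, q)`. -/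
def cpr {n : ℕ} (q : Edge n → ℝ) (L S : Set (EGraph n)) : ℝ :=
  pr q (S ∩ L) / pr q L

/-- Conditional expectation of `f` given the event `L` under `G(n, q)`. -/
def cex {n : ℕ} (q : Edge n → ℝ) (L : Set (EGraph n)) (f : EGraph n → ℝ) : ℝ :=
  (∑ G : EGraph n, if G ∈ L then wt q G * f G else 0) / pr q L

/-- The simple graph on `Fin n` associated to an edge-indicator vector. -/
def toSG {n : ℕ} (G : EGraph n) : SimpleGraph (Fin n) :=
  SimpleGraph.fromEdgeSet {e : Sym2 (Fin n) | ∃ h : ¬e.IsDiag, G ⟨e, h⟩ = true}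

/-- The number of copies of `H` in `G`, i.e. the number of subgraphs of `G` isomorphic to `H`. -/
def countCopies {k n : ℕ} (H : SimpleGraph (Fin k)) (G : SimpleGraph (Fin n)) : ℕ :=
  Set.ncard {K : G.Subgraph | Nonempty (H ≃g K.coe)}

/-- `N_H(G)` for an edge-indicator vector `G`, as a real number. -/
def NH {k n : ℕ} (H : SimpleGraph (Fin k)) (G : EGraph n) : ℝ :=
  countCopies H (toSG G)

/-- `E[N_H(q)]`, the expected number of copies of `H` in `G(n, q)`. -/
def expNH {k : ℕ} (H : SimpleGraph (Fin k)) {n : ℕ} (q : Edge n → ℝ) : ℝ :=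
  ∑ G : EGraph n, wt q G * NH H G

/-- `N_H(K_n)`, the number of copies of `H` in the complete graph `K_n`. -/
def NHKn {k : ℕ} (H : SimpleGraph (Fin k)) (n : ℕ) : ℝ :=
  countCopies H (⊤ : SimpleGraph (Fin n))

/-- The lower tail event `L_p(H, η) = {G : N_H(G) ≤ η E[N_H(p)]}`. -/
def lowerTail {k : ℕ} (H : SimpleGraph (Fin k)) (n : ℕ) (p η : ℝ) : Set (EGraph n) :=
  {G | NH H G ≤ η * expNH H (fun _ : Edge n => p)}

/-- `h(x) = x log x - x + 1` (with `h(0) = 1` since `Real.log 0 = 0`). -/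
def hfun (x : ℝ) : ℝ := x * Real.log x - x + 1

/-- The relative entropy `i_p(t)` of `Ber(t)` with respect to `Ber(p)`. -/
def ip (p t : ℝ) : ℝ := t * Real.log (t / p) + (1 - t) * Real.log ((1 - t) / (1 - p))

/-- The number of edges of `H` as a real number. -/
def eH {k : ℕ} (H : SimpleGraph (Fin k)) : ℝ := H.edgeSet.ncard

/-- The defining equation of the threshold `η_H`, for a graph with `e` edges. -/
def etaEq (e η : ℝ) : Prop :=
  hfun (η ^ (1 / η)) =
    hfun (η ^ (1 / e)) + η ^ (1 / e) * Real.log (η ^ (1 / e)) *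
      (Real.log (η ^ (1 / η)) - Real.log (η ^ (1 / e)))

/-- The 2-density `m_2(H)`. -/
def m2 {k : ℕ} (H : SimpleGraph (Fin k)) : ℝ :=
  sSup {x : ℝ | ∃ F : H.Subgraph, 2 ≤ F.edgeSet.ncard ∧
    x = ((F.edgeSet.ncard : ℝ) - 1) / ((F.verts.ncard : ℝ) - 2)}

/-- The variational problem `Φ_p(H, η)`. -/
def PhiP {k : ℕ} (H : SimpleGraph (Fin k)) (n : ℕ) (p η : ℝ) : ℝ :=
  sInf {x : ℝ | ∃ q : Edge n → ℝ, (∀ e, q e ∈ Set.Icc (0:ℝ) 1) ∧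
    expNH H q ≤ η * expNH H (fun _ : Edge n => p) ∧ x = ∑ e : Edge n, ip p (q e)}

/-- The sparse limit variational problem `Φ(H, η)`. -/
def Phi {k : ℕ} (H : SimpleGraph (Fin k)) (n : ℕ) (η : ℝ) : ℝ :=
  sInf {x : ℝ | ∃ q : Edge n → ℝ, (∀ e, q e ∈ Set.Icc (0:ℝ) 1) ∧
    expNH H q ≤ η * NHKn H n ∧ x = ∑ e : Edge n, hfun (q e)}

/-- The cut norm of an `n × n` real matrix. -/
def cutNorm {n : ℕ} (M : Matrix (Fin n) (Fin n) ℝ) : ℝ :=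
  sSup {x : ℝ | ∃ a b : Fin n → ℝ, (∀ i, a i ∈ Set.Icc (0:ℝ) 1) ∧ (∀ i, b i ∈ Set.Icc (0:ℝ) 1) ∧
    x = |∑ i : Fin n, ∑ j : Fin n, a i * M i j * b j| / (n : ℝ) ^ 2}

/-- The symmetric matrix with entries `q_{ij} - c` off the diagonal, `0` on the diagonal. -/
def devMat {n : ℕ} (q : Edge n → ℝ) (c : ℝ) : Matrix (Fin n) (Fin n) ℝ :=
  fun i j => if h : i = j then 0 else q ⟨s(i, j), by simp [Sym2.mk_isDiag_iff, h]⟩ - c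

/-- The edge-indicator vector of `G` as a real vector. -/
def ind {n : ℕ} (G : EGraph n) : Edge n → ℝ := fun e => if G e then 1 else 0

/-- `Y_A = ∏_{e ∈ A} Y_e`. -/
def YA {n : ℕ} (A : Finset (Edge n)) (G : EGraph n) : ℝ :=
  ∏ e ∈ A, (if G e then (1:ℝ) else 0)

/-- The event that a configuration agrees with `G0` on the set `W`. -/
def agreeOn {n : ℕ} (W : Finset (Edge n)) (G0 : EGraph n) : Set (EGraph n) :=
  {G | ∀ w ∈ W, G w = G0 w}

/-- The conditional expectation `E[f | (Y_w)_{w ∈ W}]` under the pmf `μ`, evaluated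
at the outcome `G0` (i.e. given that `Y` agrees with `G0` on `W`). -/
def condExpW {n : ℕ} (μ : EGraph n → ℝ) (W : Finset (Edge n)) (f : EGraph n → ℝ)
    (G0 : EGraph n) : ℝ :=
  (∑ G : EGraph n, if G ∈ agreeOn W G0 then μ G * f G else 0) /
    (∑ G : EGraph n, if G ∈ agreeOn W G0 then μ G else 0)

/-- The pmf of `G(n, p)` conditioned on the lower tail event `L_p(H, η)`. -/
def ltPMF {k : ℕ} (H : SimpleGraph (Fin k)) (n : ℕ) (p η : ℝ) : EGraph n → ℝ :=
  fun G => (if G ∈ lowerTail H n p η then wt (fun _ : Edge n => p) G else 0) /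
    pr (fun _ : Edge n => p) (lowerTail H n p η)

/-- The hyperedges of the hypergraph `H(H)`: edge sets of copies of `H` in `K_n`. -/
def copySets {k : ℕ} (H : SimpleGraph (Fin k)) (n : ℕ) : Finset (Finset (Edge n)) :=
  Finset.univ.filter (fun A => ∃ f : Fin k ↪ Fin n,
    ∀ e : Edge n, e ∈ A ↔ ∃ u v : Fin k, H.Adj u v ∧ (e : Sym2 (Fin n)) = s(f u, f v))

/-- The correlation `D_W(B, b)` as a random variable (a function of the outcome `G0`). -/
def DW {n : ℕ} (μ : EGraph n → ℝ) (W : Finset (Edge n)) (B : Finset (Edge n)) (b : Edge n)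
    (G0 : EGraph n) : ℝ :=
  condExpW μ W (YA B) G0 - condExpW μ W (YA (B.erase b)) G0 * condExpW μ W (YA {b}) G0

/-- The energy `E_H(W)` of a set `W` with respect to the pmf `μ`. -/
def energy {k n : ℕ} (H : SimpleGraph (Fin k)) (μ : EGraph n → ℝ) (p : ℝ)
    (W : Finset (Edge n)) : ℝ :=
  ∑ G0 : EGraph n, μ G0 *
    ∑ A ∈ (copySets H n).filter (fun A => Disjoint A W),
      ∑ B ∈ A.powerset.filter (fun B => 2 ≤ B.card),
        ∑ b ∈ B, (DW μ W B b G0) ^ 2 /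
          ((Nat.choose H.edgeSet.ncard B.card : ℝ) * (B.card : ℝ) * p ^ (2 * B.card))

end LowerTails


namespace LowerTails

variable {n : ℕ}


/-- indicator-restricted function -/
def indf (S : Set (EGraph n)) (f : EGraph n → ℝ) (G : EGraph n) : ℝ :=
  if G ∈ S then f G else 0

lemma wt_nonneg {q : Edge n → ℝ} (hq : ∀ e, q e ∈ Set.Icc (0:ℝ) 1) (G : EGraph n) :
    0 ≤ wt q G := by
  apply Finset.prod_nonneg
  intro e _
  rcases hq e with ⟨h0, h1⟩
  split_ifs <;> linarith

lemma wt_pos {q : Edge n → ℝ} (hq : ∀ e, q e ∈ Set.Ioo (0:ℝ) 1) (G : EGraph n) :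
    0 < wt q G := by
  apply Finset.prod_pos
  intro e _
  rcases hq e with ⟨h0, h1⟩
  split_ifs <;> linarith

lemma indf_nonneg {S : Set (EGraph n)} {q : Edge n → ℝ}
    (hq : ∀ e, q e ∈ Set.Icc (0:ℝ) 1) (G : EGraph n) : 0 ≤ indf S (wt q) G := by
  unfold indf; split_ifs
  · exact wt_nonneg hq G
  · exact le_refl 0

lemma sum_indf (S : Set (EGraph n)) (f : EGraph n → ℝ) [DecidablePred (· ∈ S)] :
    ∑ G : EGraph n, indf S f G = ∑ G ∈ Finset.univ.filter (· ∈ S), f G := by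
  rw [Finset.sum_filter]
  apply Finset.sum_congr rfl
  intro G _
  by_cases h : G ∈ S <;> simp [indf, h]

lemma step (q : Edge n → ℝ) (hq : ∀ e, q e ∈ Set.Icc (0:ℝ) 1)
    (S : Set (EGraph n)) (a : Edge n)
    (hS : ∀ G ∈ S, G a = true → Function.update G a false ∈ S) :
    ∑ G : EGraph n, indf (S ∩ {G | G a = true}) (wt q) G
      ≤ q a * ∑ G : EGraph n, indf S (wt q) G := by
  classical
  set r : EGraph n → ℝ := fun G => ∏ e ∈ Finset.univ.erase a, (if G e then q e else 1 - q e)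
    with hr
  have hwt : ∀ G : EGraph n, wt q G = (if G a then q a else 1 - q a) * r G := by
    intro G
    exact (Finset.mul_prod_erase Finset.univ _ (Finset.mem_univ a)).symm
  have hrupd : ∀ G : EGraph n, r (Function.update G a false) = r G := by
    intro G
    apply Finset.prod_congr rfl
    intro e he
    rw [Function.update_of_ne (Finset.ne_of_mem_erase he)]
  set T1 : Finset (EGraph n) :=
    Finset.univ.filter (· ∈ S ∩ {G | G a = true}) with hT1
  have memT1 : ∀ G, G ∈ T1 ↔ G ∈ S ∧ G a = true := by
    intro G; simp [hT1, Set.mem_setOf_eq]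
  set T2 : Finset (EGraph n) := T1.image (fun G => Function.update G a false) with hT2
  have hinj : ∀ x ∈ T1, ∀ y ∈ T1,
      Function.update x a false = Function.update y a false → x = y := by
    intro x hx y hy h
    rw [memT1] at hx hy
    funext e
    by_cases he : e = a
    · subst he; rw [hx.2, hy.2]
    · have := congrFun h e
      rwa [Function.update_of_ne he, Function.update_of_ne he] at this
  have hdisj : Disjoint T1 T2 := by
    rw [Finset.disjoint_left]
    intro G hG hG2
    rw [memT1] at hG
    simp only [hT2, Finset.mem_image] at hG2
    obtain ⟨G', _, hG'⟩ := hG2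
    have : G a = false := by rw [← hG', Function.update_self]
    rw [hG.2] at this
    simp at this
  have hsub : T1 ∪ T2 ⊆ Finset.univ.filter (· ∈ S) := by
    intro G hG
    rcases Finset.mem_union.mp hG with h | h
    · rw [memT1] at h
      simp [h.1]
    · simp only [hT2, Finset.mem_image] at h
      obtain ⟨G', hG', rfl⟩ := h
      rw [memT1] at hG'
      simp [hS G' hG'.1 hG'.2]
  have key : ∀ G ∈ T1, wt q G + wt q (Function.update G a false) = r G := by
    intro G hG
    rw [memT1] at hG
    rw [hwt G, hwt (Function.update G a false), hrupd, Function.update_self, hG.2]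
    simp; ring
  have hsum1 : ∑ G : EGraph n, indf (S ∩ {G | G a = true}) (wt q) G = ∑ G ∈ T1, wt q G :=
    sum_indf _ _
  have hsumr : ∑ G ∈ T1, wt q G = q a * ∑ G ∈ T1, r G := by
    rw [Finset.mul_sum]
    apply Finset.sum_congr rfl
    intro G hG
    rw [memT1] at hG
    rw [hwt G, hG.2]; simp
  have hle : ∑ G ∈ T1, r G ≤ ∑ G : EGraph n, indf S (wt q) G := by
    have h2 : ∑ G ∈ T1, r G = ∑ G ∈ T1 ∪ T2, wt q G := by
      rw [Finset.sum_union hdisj, hT2, Finset.sum_image hinj, ← Finset.sum_add_distrib]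
      exact (Finset.sum_congr rfl key).symm
    rw [h2, sum_indf]
    exact Finset.sum_le_sum_of_subset_of_nonneg hsub (fun G _ _ => wt_nonneg hq G)
  rw [hsum1, hsumr]
  exact mul_le_mul_of_nonneg_left hle (hq a).1

lemma harris (q : Edge n → ℝ) (hq : ∀ e, q e ∈ Set.Icc (0:ℝ) 1)
    (S : Set (EGraph n)) (A : Finset (Edge n))
    (hS : ∀ G ∈ S, ∀ a ∈ A, G a = true → Function.update G a false ∈ S) :
    ∑ G : EGraph n, indf (S ∩ {G | ∀ a ∈ A, G a = true}) (wt q) G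
      ≤ (∏ a ∈ A, q a) * ∑ G : EGraph n, indf S (wt q) G := by
  classical
  induction A using Finset.induction_on with
  | empty =>
    simp only [Finset.prod_empty, one_mul]
    apply le_of_eq
    apply Finset.sum_congr rfl
    intro G _
    congr 1
    simp
  | @insert a A' ha ih =>
    have hseq : S ∩ {G : EGraph n | ∀ b ∈ insert a A', G b = true}
        = (S ∩ {G | ∀ b ∈ A', G b = true}) ∩ {G | G a = true} := by
      ext G
      simp only [Set.mem_inter_iff, Set.mem_setOf_eq, Finset.forall_mem_insert]
      tauto
    have hstep := step q hq (S ∩ {G | ∀ b ∈ A', G b = true}) a ?_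
    · have hih := ih (fun G hG b hb => hS G hG b (Finset.mem_insert_of_mem hb))
      rw [hseq, Finset.prod_insert ha]
      calc ∑ G : EGraph n, indf ((S ∩ {G | ∀ b ∈ A', G b = true}) ∩ {G | G a = true}) (wt q) G
          ≤ q a * ∑ G : EGraph n, indf (S ∩ {G | ∀ b ∈ A', G b = true}) (wt q) G := hstep
        _ ≤ q a * ((∏ b ∈ A', q b) * ∑ G : EGraph n, indf S (wt q) G) :=
            mul_le_mul_of_nonneg_left hih (hq a).1
        _ = (q a * ∏ b ∈ A', q b) * ∑ G : EGraph n, indf S (wt q) G := by ring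
    · rintro G ⟨hGS, hGA'⟩ hGa
      simp only [Set.mem_setOf_eq] at hGA' ⊢
      refine ⟨hS G hGS a (Finset.mem_insert_self a A') hGa, ?_⟩
      intro b hb
      rw [Function.update_of_ne (by rintro rfl; exact ha hb : b ≠ a)]
      exact hGA' b hb


lemma toSG_mono {G G' : EGraph n} (h : ∀ e, G e = true → G' e = true) :
    toSG G ≤ toSG G' := by
  apply SimpleGraph.fromEdgeSet_mono
  rintro e ⟨hd, he⟩
  exact ⟨hd, h _ he⟩

instance subgraphFinite {m : ℕ} (G : SimpleGraph (Fin m)) : Finite G.Subgraph := by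
  have : Function.Injective (fun K : G.Subgraph => (K.verts, K.Adj)) := by
    intro a b h
    simp only [Prod.mk.injEq] at h
    exact SimpleGraph.Subgraph.ext h.1 h.2
  exact Finite.of_injective _ this

lemma countCopies_mono {k : ℕ} (H : SimpleGraph (Fin k)) {G G' : SimpleGraph (Fin n)}
    (h : G ≤ G') : countCopies H G ≤ countCopies H G' := by
  unfold countCopies
  apply Set.ncard_le_ncard_of_injOn
    (fun K : G.Subgraph =>
      (⟨K.verts, K.Adj, fun hq => h (K.adj_sub hq), K.edge_vert, K.symm⟩ : G'.Subgraph))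
  · rintro K ⟨iso⟩
    exact ⟨iso⟩
  · intro K1 _ K2 _ heq
    have hv := congrArg SimpleGraph.Subgraph.verts heq
    have ha := congrArg SimpleGraph.Subgraph.Adj heq
    exact SimpleGraph.Subgraph.ext hv ha

lemma NH_mono {k : ℕ} (H : SimpleGraph (Fin k)) {G G' : EGraph n}
    (h : ∀ e, G e = true → G' e = true) : NH H G ≤ NH H G' := by
  unfold NH
  exact_mod_cast countCopies_mono H (toSG_mono h)

lemma lowerTail_update {k : ℕ} (H : SimpleGraph (Fin k)) (p η : ℝ)
    {G : EGraph n} (hG : G ∈ lowerTail H n p η) (a : Edge n) :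
    Function.update G a false ∈ lowerTail H n p η := by
  refine le_trans (NH_mono H ?_) hG
  intro e he
  by_cases h : e = a
  · subst h; rw [Function.update_self] at he; exact absurd he (by simp)
  · rwa [Function.update_of_ne h] at he

lemma YA_eq (A : Finset (Edge n)) (G : EGraph n) :
    YA A G = if ∀ a ∈ A, G a = true then 1 else 0 := by
  unfold YA
  split_ifs with h
  · exact Finset.prod_eq_one (fun e he => by simp [h e he])
  · push_neg at h
    obtain ⟨e, he, hge⟩ := h
    exact Finset.prod_eq_zero he (by simp [hge])

end LowerTails

namespace LowerTails

/-- Harris-type bound, KS Claim 16. Under the lower tail measure, the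
conditional probability of any fixed edge set appearing is at most `p^{|A|}`. -/
theorem statement2 {k : ℕ} (H : SimpleGraph (Fin k)) (hH : H.edgeSet.Nonempty)
    (n : ℕ) (p η : ℝ) (hp : p ∈ Set.Ioo (0:ℝ) 1) (hη : η ∈ Set.Ioc (0:ℝ) 1)
    (W A : Finset (Edge n)) (hA : Disjoint A W) (G0 : EGraph n)
    (hG0 : 0 < ltPMF H n p η G0) :
    condExpW (ltPMF H n p η) W (YA A) G0 ≤ p ^ A.card := by
  classical
  obtain ⟨hp0, hp1⟩ := hp
  set q : Edge n → ℝ := fun _ : Edge n => p with hqdef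
  have hq : ∀ e : Edge n, q e ∈ Set.Icc (0:ℝ) 1 := fun e => ⟨le_of_lt hp0, le_of_lt hp1⟩
  have hqo : ∀ e : Edge n, q e ∈ Set.Ioo (0:ℝ) 1 := fun e => ⟨hp0, hp1⟩
  set L : Set (EGraph n) := lowerTail H n p η with hLdef
  -- positivity facts from hG0
  have hwtpos : ∀ G : EGraph n, 0 < wt q G := wt_pos hqo
  have hprnn : 0 ≤ pr q L := by
    apply Finset.sum_nonneg
    intro G _
    split_ifs
    · exact le_of_lt (hwtpos G)
    · exact le_refl 0
  have hpr : 0 < pr q L := by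
    rcases lt_or_eq_of_le hprnn with h | h
    · exact h
    · exfalso
      have : ltPMF H n p η G0 = 0 := by
        unfold ltPMF
        rw [← hqdef, ← hLdef, ← h, div_zero]
      rw [this] at hG0
      exact lt_irrefl 0 hG0
  have hG0L : G0 ∈ L := by
    by_contra hc
    have : ltPMF H n p η G0 = 0 := by
      unfold ltPMF
      rw [← hqdef, ← hLdef, if_neg hc, zero_div]
    rw [this] at hG0
    exact lt_irrefl 0 hG0
  -- the relevant event
  set S : Set (EGraph n) := L ∩ agreeOn W G0 with hSdef
  set N : ℝ := ∑ G : EGraph n, indf (S ∩ {G | ∀ a ∈ A, G a = true}) (wt q) G with hNdef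
  set D : ℝ := ∑ G : EGraph n, indf S (wt q) G with hDdef
  have hDpos : 0 < D := by
    have hmem : G0 ∈ S := ⟨hG0L, fun w _ => rfl⟩
    have h1 : indf S (wt q) G0 = wt q G0 := if_pos hmem
    calc (0:ℝ) < wt q G0 := hwtpos G0
      _ = indf S (wt q) G0 := h1.symm
      _ ≤ D := Finset.single_le_sum (fun G _ => indf_nonneg hq G) (Finset.mem_univ G0)
  -- rewrite the conditional expectation as N / D
  have hnum : ∀ G : EGraph n,
      (if G ∈ agreeOn W G0 then ltPMF H n p η G * YA A G else 0)
        = indf (S ∩ {G | ∀ a ∈ A, G a = true}) (wt q) G / pr q L := by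
    intro G
    unfold ltPMF indf
    rw [← hqdef, ← hLdef, YA_eq]
    by_cases h1 : G ∈ agreeOn W G0
    · rw [if_pos h1]
      by_cases h2 : G ∈ L
      · by_cases h3 : ∀ a ∈ A, G a = true
        · rw [if_pos h2, if_pos h3,
            if_pos (show G ∈ S ∩ {G | ∀ a ∈ A, G a = true} from ⟨⟨h2, h1⟩, h3⟩), mul_one]
        · rw [if_pos h2, if_neg h3,
            if_neg (show G ∉ S ∩ {G | ∀ a ∈ A, G a = true} from fun hc => h3 hc.2),
            mul_zero, zero_div]
      · rw [if_neg h2,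
          if_neg (show G ∉ S ∩ {G | ∀ a ∈ A, G a = true} from fun hc => h2 hc.1.1),
          zero_div, zero_mul]
    · rw [if_neg h1,
        if_neg (show G ∉ S ∩ {G | ∀ a ∈ A, G a = true} from fun hc => h1 hc.1.2), zero_div]
  have hden : ∀ G : EGraph n,
      (if G ∈ agreeOn W G0 then ltPMF H n p η G else 0)
        = indf S (wt q) G / pr q L := by
    intro G
    unfold ltPMF indf
    rw [← hqdef, ← hLdef]
    by_cases h1 : G ∈ agreeOn W G0
    · rw [if_pos h1]
      by_cases h2 : G ∈ L
      · rw [if_pos h2, if_pos (show G ∈ S from ⟨h2, h1⟩)]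
      · rw [if_neg h2, if_neg (show G ∉ S from fun hc => h2 hc.1)]
    · rw [if_neg h1, if_neg (show G ∉ S from fun hc => h1 hc.2), zero_div]
  have hce : condExpW (ltPMF H n p η) W (YA A) G0 = N / D := by
    unfold condExpW
    rw [Finset.sum_congr rfl (fun G _ => hnum G), Finset.sum_congr rfl (fun G _ => hden G)]
    rw [← Finset.sum_div, ← Finset.sum_div, ← hNdef, ← hDdef]
    rw [div_div_div_cancel_right₀ (ne_of_gt hpr)]
  -- down-closedness of S on edges in A
  have hSclosed : ∀ G ∈ S, ∀ a ∈ A, G a = true → Function.update G a false ∈ S := by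
    rintro G ⟨hGL, hGW⟩ a haA _
    constructor
    · exact lowerTail_update H p η hGL a
    · intro w hw
      have haw : a ≠ w := by
        rintro rfl
        exact (Finset.disjoint_left.mp hA haA) hw
      rw [Function.update_of_ne (Ne.symm haw)]
      exact hGW w hw
  -- Harris inequality
  have hHar : N ≤ p ^ A.card * D := by
    have := harris q hq S A hSclosed
    rw [Finset.prod_const] at this
    exact this
  rw [hce]
  rw [div_le_iff₀ hDpos]
  calc N ≤ p ^ A.card * D := hHar
    _ = p ^ A.card * D := rfl


end LowerTails
end
end

section
/- Let e be a positive integer and h(x) := x·log x − x + 1. There is a unique η_* ∈ (0,1) satisfying h(η_*^{1/η_*}) = h(η_*^{1/e}) + η_*^{1/e}·log(η_*^{1/e})·(log(η_*^{1/η_*}) − log(η_*^{1/e})); moreover, for this η_*, the inequality h(x) ≥ h(r) + r·log(r)·(log x − log r) holds for all (x, r) ∈ [η_*^{1/η_*}, 1] × [η_*^{1/e}, 1]. -/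
open scoped BigOperators

attribute [local instance] Classical.propDecidable

noncomputable section

/-!
Substituting `x = exp t` turns `h` into `φ t = h (exp t) = t eᵗ - eᵗ + 1`, with `φ' t = t eᵗ`, so
`φ` is strictly convex on `[-1, ∞)` and strictly concave on `(-∞, -1]`. The inequality says that
the tangent to `φ` at `s = log r` lies below `φ` at `t = log x`, and `η_*` is the point where the
tangent at `v(η) = log η / e` meets `φ` again at `u(η) = log η / η < v(η)`; such a meeting forces
`u < -1 < v`. Convexity on `[-1, ∞)` puts tangents at larger `s` below, to the left of `s`;
concavity on `(-∞, -1]` spreads positivity of `φ - tangent` from `u` over `(u, -1]`. As `u` and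
`v` both increase with `η`, a zero at `η₁` makes the gap positive at every `η₂ > η₁`
(uniqueness) and nonnegative on the whole rectangle. Existence is the intermediate value theorem
between `η = exp (-e)`, where `v = -1` and the gap is negative by concavity, and
`η = exp (-1/2)`, where `u ≥ -1` and the gap is positive by convexity.
-/

open Real Set

section

variable {S : Set ℝ} {f : ℝ → ℝ} {s t : ℝ}

theorem StrictConvexOn.lt_of_hasDerivAt_eq_zero (hf : StrictConvexOn ℝ S f) (hs : s ∈ S)
    (ht : t ∈ S) (hts : t ≠ s) (hd : HasDerivAt f 0 s) : f s < f t := by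
  rcases hts.lt_or_gt with hlt | hgt
  · have := hf.slope_lt_of_hasDerivAt ht hs hlt hd
    rw [slope_def_field, div_neg_iff] at this
    rcases this with ⟨-, h⟩ | ⟨h, -⟩ <;> linarith
  · have := hf.lt_slope_of_hasDerivAt hs ht hgt hd
    rw [slope_def_field, div_pos_iff] at this
    rcases this with ⟨h, -⟩ | ⟨-, h⟩ <;> linarith

theorem StrictConcaveOn.lt_of_hasDerivAt_eq_zero (hf : StrictConcaveOn ℝ S f) (hs : s ∈ S)
    (ht : t ∈ S) (hts : t ≠ s) (hd : HasDerivAt f 0 s) : f t < f s :=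
  neg_lt_neg_iff.mp <| hf.neg.lt_of_hasDerivAt_eq_zero hs ht hts (by simpa using hd.neg)

end

namespace LowerTails

lemma hfun_exp (t : ℝ) : hfun (exp t) = exp t * t - exp t + 1 := by
  rw [hfun, log_exp]

def tangentGap (s t : ℝ) : ℝ := hfun (exp t) - (hfun (exp s) + exp s * s * (t - s))

lemma tangentGap_log {x r : ℝ} (hx : 0 < x) (hr : 0 < r) :
    tangentGap (log r) (log x) = hfun x - (hfun r + r * log r * (log x - log r)) := by
  rw [tangentGap, exp_log hx, exp_log hr]

@[simp]
lemma tangentGap_self (s : ℝ) : tangentGap s s = 0 := by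
  simp [tangentGap]

lemma hasDerivAt_exp_mul_self (t : ℝ) : HasDerivAt (fun t => exp t * t) (exp t * (t + 1)) t := by
  simpa [mul_add] using (hasDerivAt_exp t).fun_mul (hasDerivAt_id' t)

lemma hasDerivAt_tangentGap (s t : ℝ) :
    HasDerivAt (tangentGap s) (exp t * t - exp s * s) t := by
  have hg : tangentGap s =
      fun t => exp t * t - exp t + 1 - (hfun (exp s) + exp s * s * (t - s)) := by
    funext t; rw [tangentGap, hfun_exp]
  rw [hg]
  refine ((((hasDerivAt_exp_mul_self t).fun_sub (hasDerivAt_exp t)).add_const 1).fun_sub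
    ((((hasDerivAt_id' t).sub_const s).const_mul (exp s * s)).const_add _)).congr_deriv ?_
  ring

lemma deriv_tangentGap (s : ℝ) : deriv (tangentGap s) = fun t => exp t * t - exp s * s :=
  funext fun t => (hasDerivAt_tangentGap s t).deriv

lemma continuous_tangentGap : Continuous (fun p : ℝ × ℝ => tangentGap p.1 p.2) := by
  simp only [tangentGap, hfun_exp]
  fun_prop

lemma strictMonoOn_exp_mul_self : StrictMonoOn (fun t => exp t * t) (Ici (-1)) := by
  refine strictMonoOn_of_deriv_pos (convex_Ici _) (by fun_prop) fun t ht => ?_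
  rw [interior_Ici] at ht
  rw [(hasDerivAt_exp_mul_self t).deriv]
  exact mul_pos (exp_pos t) (by linarith [ht.out])

lemma strictAntiOn_exp_mul_self : StrictAntiOn (fun t => exp t * t) (Iic (-1)) := by
  refine strictAntiOn_of_deriv_neg (convex_Iic _) (by fun_prop) fun t ht => ?_
  rw [interior_Iic] at ht
  rw [(hasDerivAt_exp_mul_self t).deriv]
  exact mul_neg_of_pos_of_neg (exp_pos t) (by linarith [ht.out])

lemma strictConvexOn_tangentGap (s : ℝ) : StrictConvexOn ℝ (Ici (-1)) (tangentGap s) := by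
  refine StrictMonoOn.strictConvexOn_of_deriv (convex_Ici _)
    (continuous_tangentGap.comp (Continuous.prodMk_right s)).continuousOn ?_
  rw [deriv_tangentGap, interior_Ici]
  exact fun a ha b hb hab => sub_lt_sub_right
    (strictMonoOn_exp_mul_self (Ioi_subset_Ici_self ha) (Ioi_subset_Ici_self hb) hab) _

lemma strictConcaveOn_tangentGap (s : ℝ) : StrictConcaveOn ℝ (Iic (-1)) (tangentGap s) := by
  refine StrictAntiOn.strictConcaveOn_of_deriv (convex_Iic _)
    (continuous_tangentGap.comp (Continuous.prodMk_right s)).continuousOn ?_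
  rw [deriv_tangentGap, interior_Iic]
  exact fun a ha b hb hab => sub_lt_sub_right
    (strictAntiOn_exp_mul_self (Iio_subset_Iic_self ha) (Iio_subset_Iic_self hb) hab) _

lemma hasDerivAt_tangentGap_self (s : ℝ) : HasDerivAt (tangentGap s) 0 s := by
  simpa using hasDerivAt_tangentGap s s

lemma tangentGap_pos {s t : ℝ} (hs : -1 ≤ s) (ht : -1 ≤ t) (hts : t ≠ s) :
    0 < tangentGap s t := by
  simpa using (strictConvexOn_tangentGap s).lt_of_hasDerivAt_eq_zero hs ht hts
    (hasDerivAt_tangentGap_self s)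

lemma tangentGap_nonneg {s t : ℝ} (hs : -1 ≤ s) (ht : -1 ≤ t) : 0 ≤ tangentGap s t := by
  rcases eq_or_ne t s with rfl | hts
  · simp
  · exact (tangentGap_pos hs ht hts).le

lemma tangentGap_neg {s t : ℝ} (hs : s ≤ -1) (ht : t ≤ -1) (hts : t ≠ s) :
    tangentGap s t < 0 := by
  simpa using (strictConcaveOn_tangentGap s).lt_of_hasDerivAt_eq_zero hs ht hts
    (hasDerivAt_tangentGap_self s)

lemma tangentGap_mono {s₁ s₂ t : ℝ} (hs₁ : -1 ≤ s₁) (hs : s₁ ≤ s₂) (ht : t ≤ s₁) :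
    tangentGap s₁ t ≤ tangentGap s₂ t := by
  have hgap : 0 ≤ tangentGap s₂ s₁ := tangentGap_nonneg (hs₁.trans hs) hs₁
  have hslope : exp s₁ * s₁ ≤ exp s₂ * s₂ :=
    strictMonoOn_exp_mul_self.monotoneOn hs₁ (hs₁.trans hs) hs
  have : tangentGap s₂ t - tangentGap s₁ t =
      tangentGap s₂ s₁ + (exp s₂ * s₂ - exp s₁ * s₁) * (s₁ - t) := by
    simp only [tangentGap]; ring
  nlinarith [mul_nonneg (sub_nonneg.2 hslope) (sub_nonneg.2 ht)]

lemma lt_neg_one_lt_of_tangentGap_eq_zero {s t : ℝ} (hts : t < s) (h : tangentGap s t = 0) :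
    t < -1 ∧ -1 < s := by
  constructor
  · by_contra! ht
    exact (tangentGap_pos (ht.trans hts.le) ht hts.ne).ne' h
  · by_contra! hs
    exact (tangentGap_neg hs (hts.le.trans hs) hts.ne).ne h

lemma tangentGap_pos_of_mem_Ioc {s a t : ℝ} (hs : -1 < s) (hat : a < t) (ht : t ≤ -1)
    (ha : 0 ≤ tangentGap s a) : 0 < tangentGap s t := by
  have hpos : 0 < tangentGap s (-1) := tangentGap_pos hs.le le_rfl hs.ne
  rcases ht.lt_or_eq with ht | rfl
  · have hseg : t ∈ openSegment ℝ a (-1) := by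
      rw [openSegment_eq_Ioo (hat.trans ht)]
      exact ⟨hat, ht⟩
    have hmin := (strictConcaveOn_tangentGap s).lt_on_openSegment (hat.trans ht).le
      (mem_Iic.2 le_rfl) (hat.trans ht).ne hseg
    exact (le_min ha hpos.le).trans_lt hmin
  · exact hpos

lemma tangentGap_pos_of_eq_zero {s₀ t₀ s t : ℝ} (hts₀ : t₀ < s₀) (h₀ : tangentGap s₀ t₀ = 0)
    (hs : s₀ ≤ s) (ht : t₀ < t) (hts : t ≠ s) : 0 < tangentGap s t := by
  obtain ⟨ht₀, hs₀⟩ := lt_neg_one_lt_of_tangentGap_eq_zero hts₀ h₀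
  rcases le_or_gt (-1) t with ht' | ht'
  · exact tangentGap_pos (hs₀.le.trans hs) ht' hts
  · calc 0 < tangentGap s₀ t := tangentGap_pos_of_mem_Ioc hs₀ ht ht'.le h₀.ge
      _ ≤ tangentGap s t := tangentGap_mono hs₀.le hs (by linarith)

lemma tangentGap_nonneg_of_eq_zero {s₀ t₀ s t : ℝ} (hts₀ : t₀ < s₀) (h₀ : tangentGap s₀ t₀ = 0)
    (hs : s₀ ≤ s) (ht : t₀ ≤ t) : 0 ≤ tangentGap s t := by
  rcases ht.lt_or_eq with ht | rfl
  · rcases eq_or_ne t s with rfl | hts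
    · simp
    · exact (tangentGap_pos_of_eq_zero hts₀ h₀ hs ht hts).le
  · calc 0 = tangentGap s₀ t₀ := h₀.symm
      _ ≤ tangentGap s t₀ :=
        tangentGap_mono (lt_neg_one_lt_of_tangentGap_eq_zero hts₀ h₀).2.le hs hts₀.le

lemma log_rpow_one_div {η : ℝ} (hη : 0 < η) (c : ℝ) : log (η ^ (1 / c)) = log η / c := by
  rw [log_rpow hη, one_div_mul_eq_div]

lemma etaEq_iff_tangentGap_eq_zero {e η : ℝ} (hη : 0 < η) :
    etaEq e η ↔ tangentGap (log η / e) (log η / η) = 0 := by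
  rw [etaEq, ← sub_eq_zero, ← tangentGap_log (rpow_pos_of_pos hη _) (rpow_pos_of_pos hη _),
    log_rpow_one_div hη, log_rpow_one_div hη]

lemma log_div_self_lt_log_div {e η : ℝ} (he : 1 ≤ e) (h₀ : 0 < η) (h₁ : η < 1) :
    log η / η < log η / e := by
  rw [div_lt_div_iff₀ h₀ (by linarith)]
  nlinarith [log_neg h₀ h₁]

lemma strictMonoOn_log_div_self : StrictMonoOn (fun x => log x / x) (Ioc 0 1) := by
  intro a ha b hb hab
  rw [div_lt_div_iff₀ ha.1 hb.1]
  calc log a * b < log b * b := mul_lt_mul_of_pos_right (log_lt_log ha.1 hab) hb.1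
    _ ≤ log b * a := mul_le_mul_of_nonpos_left hab.le (log_nonpos hb.1.le hb.2)

lemma exists_tangentGap_log_div_eq_zero {e : ℝ} (he : 1 ≤ e) :
    ∃ η ∈ Ioo (0 : ℝ) 1, tangentGap (log η / e) (log η / η) = 0 := by
  set a := exp (-e)
  set b := exp (-(1 / 2))
  have ha : 0 < a := exp_pos _
  have hab : a < b := exp_lt_exp.2 (by linarith)
  have hb : b < 1 := exp_lt_one_iff.2 (by norm_num)
  have hcont : ContinuousOn (fun η => tangentGap (log η / e) (log η / η)) (Icc a b) := by
    have hne : ∀ x ∈ Icc a b, x ≠ 0 := fun x hx => (ha.trans_le hx.1).ne'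
    have hlog : ContinuousOn log (Icc a b) := continuousOn_log.mono hne
    exact continuous_tangentGap.comp_continuousOn
      ((hlog.div_const e).prodMk (hlog.div continuousOn_id hne))
  have hneg : tangentGap (log a / e) (log a / a) < 0 := by
    have hts := log_div_self_lt_log_div he ha (hab.trans hb)
    have hs : log a / e = -1 := by rw [log_exp, neg_div, div_self (by positivity)]
    rw [hs] at hts ⊢
    exact tangentGap_neg le_rfl hts.le hts.ne
  have hpos : 0 < tangentGap (log b / e) (log b / b) := by
    have hts := log_div_self_lt_log_div he (exp_pos _) hb
    have hexp_half : exp (1 / 2) ≤ 2 := by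
      have := exp_bound_div_one_sub_of_interval (x := 1 / 2) (by norm_num) (by norm_num)
      norm_num at this ⊢; linarith
    have ht : -1 ≤ log b / b := by
      rw [log_exp, div_eq_mul_inv, ← exp_neg, neg_neg]
      linarith
    exact tangentGap_pos (ht.trans hts.le) ht hts.ne
  obtain ⟨η, hη, hz⟩ := intermediate_value_Icc hab.le hcont ⟨hneg.le, hpos.le⟩
  exact ⟨η, ⟨ha.trans_le hη.1, hη.2.trans_lt hb⟩, hz⟩

lemma tangentGap_log_div_pos_of_lt {e η₁ η₂ : ℝ} (he : 1 ≤ e) (h₁ : 0 < η₁) (h₁₂ : η₁ < η₂)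
    (h₂ : η₂ < 1) (hz : tangentGap (log η₁ / e) (log η₁ / η₁) = 0) :
    0 < tangentGap (log η₂ / e) (log η₂ / η₂) :=
  tangentGap_pos_of_eq_zero (log_div_self_lt_log_div he h₁ (h₁₂.trans h₂)) hz
    (div_le_div_of_nonneg_right (log_le_log h₁ h₁₂.le) (by linarith))
    (strictMonoOn_log_div_self ⟨h₁, (h₁₂.trans h₂).le⟩ ⟨h₁.trans h₁₂, h₂.le⟩ h₁₂)
    (log_div_self_lt_log_div he (h₁.trans h₁₂) h₂).ne

lemma eq_of_tangentGap_log_div_eq_zero {e η₁ η₂ : ℝ} (he : 1 ≤ e) (hη₁ : η₁ ∈ Ioo 0 1)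
    (hη₂ : η₂ ∈ Ioo 0 1) (h₁ : tangentGap (log η₁ / e) (log η₁ / η₁) = 0)
    (h₂ : tangentGap (log η₂ / e) (log η₂ / η₂) = 0) : η₁ = η₂ := by
  rcases lt_trichotomy η₁ η₂ with h | h | h
  · exact absurd h₂ (tangentGap_log_div_pos_of_lt he hη₁.1 h hη₂.2 h₁).ne'
  · exact h
  · exact absurd h₁ (tangentGap_log_div_pos_of_lt he hη₂.1 h hη₁.2 h₂).ne'

/-- Zhao's Fact 5.5: existence and uniqueness of `η_*` and the tangent
line inequality. -/
theorem statement8 (e : ℕ) (he : 1 ≤ e) :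
    ∃ η : ℝ, η ∈ Set.Ioo (0:ℝ) 1 ∧ etaEq (e : ℝ) η ∧
      (∀ η' : ℝ, η' ∈ Set.Ioo (0:ℝ) 1 → etaEq (e : ℝ) η' → η' = η) ∧
      ∀ x r : ℝ, x ∈ Set.Icc (η ^ (1 / η)) 1 → r ∈ Set.Icc (η ^ (1 / (e : ℝ))) 1 →
        hfun r + r * Real.log r * (Real.log x - Real.log r) ≤ hfun x := by
  have he' : (1 : ℝ) ≤ e := by exact_mod_cast he
  obtain ⟨η, hη, hz⟩ := exists_tangentGap_log_div_eq_zero he'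
  refine ⟨η, hη, (etaEq_iff_tangentGap_eq_zero hη.1).2 hz, fun η' hη' h' => ?_,
    fun x r hx hr => ?_⟩
  · exact eq_of_tangentGap_log_div_eq_zero he' hη' hη
      ((etaEq_iff_tangentGap_eq_zero hη'.1).1 h') hz
  · have hx₀ : 0 < x := (rpow_pos_of_pos hη.1 _).trans_le hx.1
    have hr₀ : 0 < r := (rpow_pos_of_pos hη.1 _).trans_le hr.1
    have hlogx := log_le_log (rpow_pos_of_pos hη.1 _) hx.1
    have hlogr := log_le_log (rpow_pos_of_pos hη.1 _) hr.1
    rw [log_rpow_one_div hη.1] at hlogx hlogr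
    rw [← sub_nonneg, ← tangentGap_log hx₀ hr₀]
    exact tangentGap_nonneg_of_eq_zero (log_div_self_lt_log_div he' hη.1 hη.2) hz hlogr hlogx

end LowerTails
end
end

section
/- For every q ∈ (0,1), the set { x ∈ (0,1] : h(x) = h(q) + q·log(q)·(log x − log q) } contains x = q and has at most two elements. -/
open scoped BigOperators

attribute [local instance] Classical.propDecidable

noncomputable section

open Real Set

/-!
Put `c = q log q` and `ψ(x) = h(x) - c log x` (`hfunSubMulLog c`); the equation says
`ψ(x) = ψ(q)`. Since `ψ'(x) = (x log x - c) / x`, Rolle's theorem puts a point with `z log z = c`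
strictly between any two solutions, and `q` is such a point too. Three solutions would therefore
produce three distinct points where the strictly convex function `x log x` takes the value `c`,
which is impossible.
-/

lemma StrictConvexOn.lt_of_mem_Ioo_of_eq {s : Set ℝ} {f : ℝ → ℝ} (hf : StrictConvexOn ℝ s f)
    {x y z : ℝ} (hx : x ∈ s) (hz : z ∈ s) (hy : y ∈ Ioo x z) (hxz : f x = f z) : f y < f x := by
  have hxz' : x < z := hy.1.trans hy.2
  have := hf.lt_on_openSegment hx hz hxz'.ne (by rwa [openSegment_eq_Ioo hxz'])
  rwa [← hxz, max_self] at this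

namespace LowerTails

lemma false_of_mul_log_eq_of_lt_of_lt {c x y z : ℝ} (hx : 0 ≤ x) (hxy : x < y) (hyz : y < z)
    (hcx : x * log x = c) (hcy : y * log y = c) (hcz : z * log z = c) : False := by
  have := strictConvexOn_mul_log.lt_of_mem_Ioo_of_eq hx (mem_Ici.2 (by linarith)) ⟨hxy, hyz⟩
    (hcx.trans hcz.symm)
  linarith

def hfunSubMulLog (c x : ℝ) : ℝ := hfun x - c * log x

lemma hasDerivAt_hfunSubMulLog (c : ℝ) {x : ℝ} (hx : x ≠ 0) :
    HasDerivAt (hfunSubMulLog c) (log x - c * x⁻¹) x := by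
  have := (((hasDerivAt_mul_log hx).sub (hasDerivAt_id x)).add_const 1).sub
    ((hasDerivAt_log hx).const_mul c)
  exact this.congr_deriv (by ring)

lemma exists_mul_log_eq_of_hfunSubMulLog_eq {c a b : ℝ} (ha : 0 < a) (hab : a < b)
    (h : hfunSubMulLog c a = hfunSubMulLog c b) : ∃ z ∈ Ioo a b, z * log z = c := by
  have hpos : ∀ x ∈ Icc a b, x ≠ 0 := fun x hx => (ha.trans_le hx.1).ne'
  obtain ⟨z, hz, hz0⟩ := exists_hasDerivAt_eq_zero hab
    (fun x hx => (hasDerivAt_hfunSubMulLog c (hpos x hx)).continuousAt.continuousWithinAt) h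
    (fun x hx => hasDerivAt_hfunSubMulLog c (hpos x (Ioo_subset_Icc_self hx)))
  refine ⟨z, hz, ?_⟩
  have hz0' : z ≠ 0 := hpos z (Ioo_subset_Icc_self hz)
  field_simp at hz0
  linarith

lemma false_of_hfunSubMulLog_eq_of_lt_of_lt {q t₁ t₂ t₃ : ℝ} (ht₁ : 0 < t₁) (h₁₂ : t₁ < t₂)
    (h₂₃ : t₂ < t₃) (hq : q = t₁ ∨ q = t₂ ∨ q = t₃)
    (e₁₂ : hfunSubMulLog (q * log q) t₁ = hfunSubMulLog (q * log q) t₂)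
    (e₂₃ : hfunSubMulLog (q * log q) t₂ = hfunSubMulLog (q * log q) t₃) : False := by
  obtain ⟨z₁, hz₁, hc₁⟩ := exists_mul_log_eq_of_hfunSubMulLog_eq ht₁ h₁₂ e₁₂
  obtain ⟨z₂, hz₂, hc₂⟩ := exists_mul_log_eq_of_hfunSubMulLog_eq (ht₁.trans h₁₂) h₂₃ e₂₃
  rcases hq with rfl | rfl | rfl
  · exact false_of_mul_log_eq_of_lt_of_lt ht₁.le hz₁.1 (hz₁.2.trans hz₂.1) rfl hc₁ hc₂
  · exact false_of_mul_log_eq_of_lt_of_lt (ht₁.trans hz₁.1).le hz₁.2 hz₂.1 hc₁ rfl hc₂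
  · exact false_of_mul_log_eq_of_lt_of_lt (ht₁.trans hz₁.1).le (hz₁.2.trans hz₂.1) hz₂.2
      hc₁ hc₂ rfl

lemma eq_of_hfunSubMulLog_eq {q x y : ℝ} (hq : 0 < q) (hx : 0 < x) (hy : 0 < y)
    (hxq : x ≠ q) (hyq : y ≠ q)
    (ex : hfunSubMulLog (q * log q) x = hfunSubMulLog (q * log q) q)
    (ey : hfunSubMulLog (q * log q) y = hfunSubMulLog (q * log q) q) : x = y := by
  wlog hxy : x < y generalizing x y
  · by_contra hne
    exact hne (this hy hx hyq hxq ey ex (lt_of_le_of_ne (not_lt.1 hxy) (Ne.symm hne))).symm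
  exfalso
  rcases lt_trichotomy q x with hqx | rfl | hxq'
  · exact false_of_hfunSubMulLog_eq_of_lt_of_lt hq hqx hxy (Or.inl rfl) ex.symm (ex.trans ey.symm)
  · exact hxq rfl
  rcases lt_trichotomy q y with hqy | rfl | hyq'
  · exact false_of_hfunSubMulLog_eq_of_lt_of_lt hx hxq' hqy (Or.inr (Or.inl rfl)) ex ey.symm
  · exact hyq rfl
  · exact false_of_hfunSubMulLog_eq_of_lt_of_lt hx hxy hyq' (Or.inr (Or.inr rfl))
      (ex.trans ey.symm) ey

/-- the tangent-line equation has `x = q` as a solution and at most two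
solutions in `(0, 1]`. -/
theorem statement12 (q : ℝ) (hq : q ∈ Set.Ioo (0:ℝ) 1) :
    q ∈ {x : ℝ | x ∈ Set.Ioc (0:ℝ) 1 ∧
        hfun x = hfun q + q * Real.log q * (Real.log x - Real.log q)} ∧
      ∃ a b : ℝ, {x : ℝ | x ∈ Set.Ioc (0:ℝ) 1 ∧
        hfun x = hfun q + q * Real.log q * (Real.log x - Real.log q)} ⊆ {a, b} := by
  set S := {x : ℝ | x ∈ Set.Ioc (0:ℝ) 1 ∧
      hfun x = hfun q + q * Real.log q * (Real.log x - Real.log q)}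
  have hψ : ∀ x ∈ S, hfunSubMulLog (q * log q) x = hfunSubMulLog (q * log q) q := by
    rintro x ⟨-, hx⟩
    simp only [hfunSubMulLog, hx]
    ring
  have hsub : (S \ {q}).Subsingleton := fun x hx y hy =>
    eq_of_hfunSubMulLog_eq hq.1 hx.1.1.1 hy.1.1.1 hx.2 hy.2 (hψ x hx.1) (hψ y hy.1)
  refine ⟨⟨⟨hq.1, hq.2.le⟩, by ring⟩, ?_⟩
  have hS : S ⊆ insert q (S \ {q}) := subset_insert_sdiff_singleton q S
  rcases hsub.eq_empty_or_singleton with h | ⟨b, h⟩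
  · exact ⟨q, q, by simpa [h] using hS⟩
  · exact ⟨q, b, h ▸ hS⟩

end LowerTails
end
end

section
/- For every q ∈ (0,1) there exist C > 0 and ε_0 > 0 such that for all ε ∈ (0, ε_0) and all x ∈ (0,1]: if |h(x) − h(q) − q·log(q)·(log x − log q)| ≤ ε³, then there exists x_0 ∈ (0,1] with h(x_0) = h(q) + q·log(q)·(log x_0 − log q) and |x − x_0| ≤ C·ε. -/
/-!
Put `G x = h x - h q - q log q (log x - log q)`. Then `G q = G' q = 0` and
`G'' x = (x - a) / x²` with `a = -q log q ∈ (0, 1)`, so `G` is concave on `(0, a]` and convex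
on `[a, 1]`. Going away from the double root `q`, `|G|` grows at least like `|x - q|³` until the
inflection point `a` is passed (the cube is needed only when `q = a = 1/e`). Past `a`, by
convexity (or concavity), `G` either stays away from zero or has one more root, near which it
grows linearly by the chord inequality; near `0`, `G → -∞`. So `|G x| ≤ ε³` puts `x` within
`2ε` of a root.
-/

open scoped BigOperators

attribute [local instance] Classical.propDecidable

noncomputable section

namespace LowerTails

open Set Real

def RootsStableOn (f : ℝ → ℝ) (S : Set ℝ) (C : ℝ) : Prop :=
  ∃ δ > 0, ∀ ε ∈ Ioo 0 δ, ∀ x ∈ S, |f x| ≤ ε ^ 3 → ∃ x₀ ∈ S, f x₀ = 0 ∧ |x - x₀| ≤ C * ε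

namespace RootsStableOn

variable {f : ℝ → ℝ} {S T : Set ℝ} {C : ℝ}

lemma union (hS : RootsStableOn f S C) (hT : RootsStableOn f T C) :
    RootsStableOn f (S ∪ T) C := by
  obtain ⟨δS, hδS, hS⟩ := hS
  obtain ⟨δT, hδT, hT⟩ := hT
  refine ⟨min δS δT, lt_min hδS hδT, fun ε hε x hx hfx => ?_⟩
  rcases hx with hx | hx
  · obtain ⟨x₀, hx₀, h⟩ := hS ε ⟨hε.1, hε.2.trans_le (min_le_left _ _)⟩ x hx hfx
    exact ⟨x₀, Or.inl hx₀, h⟩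
  · obtain ⟨x₀, hx₀, h⟩ := hT ε ⟨hε.1, hε.2.trans_le (min_le_right _ _)⟩ x hx hfx
    exact ⟨x₀, Or.inr hx₀, h⟩

lemma of_forall_le_abs {c : ℝ} (hc : 0 < c) (h : ∀ x ∈ S, c ≤ |f x|) :
    RootsStableOn f S C := by
  refine ⟨min 1 c, lt_min one_pos hc, fun ε ⟨hε0, hε⟩ x hx hfx => absurd (h x hx) ?_⟩
  have hε1 : ε < 1 := hε.trans_le (min_le_left _ _)
  have hεc : ε < c := hε.trans_le (min_le_right _ _)
  have : ε ^ 3 ≤ ε := pow_le_of_le_one hε0.le hε1.le (by norm_num)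
  linarith

lemma of_neg_comp_neg (h : RootsStableOn (fun y => -f (-y)) S C) :
    RootsStableOn f (-S) C := by
  obtain ⟨δ, hδ, h⟩ := h
  refine ⟨δ, hδ, fun ε hε x hx hfx => ?_⟩
  obtain ⟨y₀, hy₀, hfy₀, hdist⟩ := h ε hε (-x) hx (by simpa using hfx)
  refine ⟨-y₀, by simpa using hy₀, by simpa using hfy₀, ?_⟩
  rwa [sub_neg_eq_add, ← abs_neg, neg_add']

lemma mono_const {C' : ℝ} (h : RootsStableOn f S C) (hC : C ≤ C') : RootsStableOn f S C' := by
  obtain ⟨δ, hδ, h⟩ := h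
  refine ⟨δ, hδ, fun ε hε x hx hfx => ?_⟩
  obtain ⟨x₀, hx₀, hfx₀, hdist⟩ := h ε hε x hx hfx
  exact ⟨x₀, hx₀, hfx₀, hdist.trans (mul_le_mul_of_nonneg_right hC hε.1.le)⟩

lemma of_pow_three_le {x₀ : ℝ} (hx₀ : x₀ ∈ S) (hfx₀ : f x₀ = 0)
    (h : ∀ x ∈ S, |x - x₀| ^ 3 ≤ 8 * |f x|) : RootsStableOn f S 2 := by
  refine ⟨1, one_pos, fun ε hε x hx hfx => ⟨x₀, hx₀, hfx₀, ?_⟩⟩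
  have : |x - x₀| ^ 3 ≤ (2 * ε) ^ 3 := by linarith [h x hx]
  exact le_of_pow_le_pow_left₀ three_ne_zero (by linarith [hε.1]) this

lemma of_mul_abs_sub_le {x₀ c : ℝ} (hc : 0 < c) (hx₀ : x₀ ∈ S) (hfx₀ : f x₀ = 0)
    (h : ∀ x ∈ S, c * |x - x₀| ≤ |f x|) : RootsStableOn f S 1 := by
  refine ⟨min 1 c, lt_min one_pos hc, fun ε ⟨hε0, hε⟩ x hx hfx => ⟨x₀, hx₀, hfx₀, ?_⟩⟩
  have hε1 : ε < 1 := hε.trans_le (min_le_left _ _)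
  have hεc : ε < c := hε.trans_le (min_le_right _ _)
  have hε3 : ε ^ 3 ≤ c * ε := by nlinarith [mul_pos hε0 hε0]
  have := h x hx
  nlinarith

end RootsStableOn

lemma le_of_hasDerivAt_le {f f' g g' : ℝ → ℝ} {s t : ℝ}
    (hf : ∀ y ∈ Icc s t, HasDerivAt f (f' y) y) (hg : ∀ y ∈ Icc s t, HasDerivAt g (g' y) y)
    (hs : g s ≤ f s) (h : ∀ y ∈ Icc s t, g' y ≤ f' y) : ∀ x ∈ Icc s t, g x ≤ f x :=
  image_le_of_deriv_right_le_deriv_boundary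
    (fun y hy => (hg y hy).continuousAt.continuousWithinAt)
    (fun y hy => (hg y (Ico_subset_Icc_self hy)).hasDerivWithinAt) hs
    (fun y hy => (hf y hy).continuousAt.continuousWithinAt)
    (fun y hy => (hf y (Ico_subset_Icc_self hy)).hasDerivWithinAt)
    (fun y hy => h y (Ico_subset_Icc_self hy))

lemma le_of_hasDerivAt_hasDerivAt_le {f f' f'' g g' g'' : ℝ → ℝ} {s t : ℝ}
    (hf : ∀ y ∈ Icc s t, HasDerivAt f (f' y) y) (hf' : ∀ y ∈ Icc s t, HasDerivAt f' (f'' y) y)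
    (hg : ∀ y ∈ Icc s t, HasDerivAt g (g' y) y) (hg' : ∀ y ∈ Icc s t, HasDerivAt g' (g'' y) y)
    (hs : g s ≤ f s) (hs' : g' s ≤ f' s) (h : ∀ y ∈ Icc s t, g'' y ≤ f'' y) :
    ∀ x ∈ Icc s t, g x ≤ f x :=
  le_of_hasDerivAt_le hf hg hs (le_of_hasDerivAt_le hf' hg' hs' h)

section CubicGrowth

variable {f f' f'' : ℝ → ℝ} {s t : ℝ}

lemma cube_div_six_le_of_sub_le_deriv2 (hf : ∀ y ∈ Icc s t, HasDerivAt f (f' y) y)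
    (hf' : ∀ y ∈ Icc s t, HasDerivAt f' (f'' y) y) (hs : f s = 0) (hs' : f' s = 0)
    (h : ∀ y ∈ Icc s t, y - s ≤ f'' y) : ∀ x ∈ Icc s t, (x - s) ^ 3 / 6 ≤ f x := by
  refine le_of_hasDerivAt_hasDerivAt_le hf hf' (g' := fun y => (y - s) ^ 2 / 2)
    (fun y _ => ?_) (fun y _ => ?_) (by simp [hs]) (by simp [hs']) h
  · exact ((((hasDerivAt_id' y).sub_const s).fun_pow 3).div_const 6).congr_deriv (by ring)
  · exact ((((hasDerivAt_id' y).sub_const s).fun_pow 2).div_const 2).congr_deriv (by ring)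

lemma le_neg_cube_div_three_of_deriv2_le_sub (hf : ∀ y ∈ Icc s t, HasDerivAt f (f' y) y)
    (hf' : ∀ y ∈ Icc s t, HasDerivAt f' (f'' y) y) (hs : f s = 0) (hs' : f' s = 0)
    (h : ∀ y ∈ Icc s t, f'' y ≤ y - t) : ∀ x ∈ Icc s t, f x ≤ -(x - s) ^ 3 / 3 := by
  have hcmp := le_of_hasDerivAt_hasDerivAt_le (s := s) (t := t) (f'' := fun y => y - t)
    (f := fun y => (y - s) ^ 3 / 6 - (t - s) * (y - s) ^ 2 / 2)
    (f' := fun y => (y - s) ^ 2 / 2 - (t - s) * (y - s)) (fun y _ => ?_) (fun y _ => ?_)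
    hf hf' (by simp [hs]) (by simp [hs']) h
  · intro x hx
    have := hcmp x hx
    nlinarith [hx.1, hx.2, sq_nonneg (x - s)]
  · exact (((((hasDerivAt_id' y).sub_const s).fun_pow 3).div_const 6).sub
      ((((hasDerivAt_id' y).sub_const s).fun_pow 2).const_mul (t - s) |>.div_const 2)).congr_deriv
      (by ring)
  · exact (((((hasDerivAt_id' y).sub_const s).fun_pow 2).div_const 2).sub
      (((hasDerivAt_id' y).sub_const s).const_mul (t - s))).congr_deriv (by ring)

end CubicGrowth

lemma _root_.ConvexOn.mul_abs_sub_le_abs {f : ℝ → ℝ} {m t x₁ : ℝ} (hf : ConvexOn ℝ (Icc m t) f)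
    (hfm : f m < 0) (hx₁ : x₁ ∈ Icc m t) (hfx₁ : f x₁ = 0) :
    ∀ x ∈ Icc m t, -f m / (t - m) * |x - x₁| ≤ |f x| := by
  have hmx₁ : m < x₁ := lt_of_le_of_ne hx₁.1 (by rintro rfl; linarith)
  intro x hx
  rcases eq_or_ne x x₁ with rfl | hxx₁
  · simp
  -- the slopes of `f` from its root `x₁` increase, starting from `-f m / (x₁ - m)` at `m`
  have hslope := hf.slope_mono hx₁ ⟨left_mem_Icc.2 (hmx₁.le.trans hx₁.2), hmx₁.ne⟩
    ⟨hx, hxx₁⟩ hx.1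
  rw [slope_def_field, slope_def_field, hfx₁, sub_zero, sub_zero] at hslope
  rw [← neg_div_neg_eq, neg_sub] at hslope
  have hc : -f m / (t - m) ≤ -f m / (x₁ - m) :=
    div_le_div_of_nonneg_left (by linarith) (by linarith) (by linarith [hx₁.2])
  have habs : f x / (x - x₁) ≤ |f x| / |x - x₁| := by
    rw [← abs_div]; exact le_abs_self _
  rw [← le_div_iff₀ (abs_pos.2 (sub_ne_zero.2 hxx₁))]
  linarith

lemma _root_.HasDerivAt.comp_neg {f : ℝ → ℝ} {f' y : ℝ} (h : HasDerivAt f f' (-y)) :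
    HasDerivAt (fun x => f (-x)) (-f') y :=
  (h.comp y (hasDerivAt_neg y)).congr_deriv (by ring)

section TwoSided

variable {f f' f'' : ℝ → ℝ} {s m t : ℝ}

lemma rootsStableOn_of_sub_le_deriv2 (hf : ∀ y ∈ Icc s t, HasDerivAt f (f' y) y)
    (hf' : ∀ y ∈ Icc s t, HasDerivAt f' (f'' y) y) (hst : s ≤ t) (hs : f s = 0) (hs' : f' s = 0)
    (h : ∀ y ∈ Icc s t, y - s ≤ f'' y) : RootsStableOn f (Icc s t) 2 := by
  refine RootsStableOn.of_pow_three_le (left_mem_Icc.2 hst) hs fun x hx => ?_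
  have := cube_div_six_le_of_sub_le_deriv2 hf hf' hs hs' h x hx
  rw [abs_of_nonneg (sub_nonneg.2 hx.1)]
  linarith [le_abs_self (f x), pow_nonneg (sub_nonneg.2 hx.1) 3]

lemma rootsStableOn_of_concave_convex (hf : ∀ y ∈ Icc s t, HasDerivAt f (f' y) y)
    (hf' : ∀ y ∈ Icc s t, HasDerivAt f' (f'' y) y) (hsm : s < m) (hmt : m < t)
    (hs : f s = 0) (hs' : f' s = 0) (hconc : ∀ y ∈ Icc s m, f'' y ≤ y - m)
    (hconv : ∀ y ∈ Icc m t, 0 ≤ f'' y) : RootsStableOn f (Icc s t) 2 := by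
  have hsub_left : Icc s m ⊆ Icc s t := Icc_subset_Icc_right hmt.le
  have hsub_right : Icc m t ⊆ Icc s t := Icc_subset_Icc_left hsm.le
  have hcubic := le_neg_cube_div_three_of_deriv2_le_sub (fun y hy => hf y (hsub_left hy))
    (fun y hy => hf' y (hsub_left hy)) hs hs' hconc
  have hfm : f m < 0 := by
    linarith [hcubic m (right_mem_Icc.2 hsm.le), pow_pos (sub_pos.2 hsm) 3]
  have hleft : RootsStableOn f (Icc s m) 2 := by
    refine RootsStableOn.of_pow_three_le (left_mem_Icc.2 hsm.le) hs fun x hx => ?_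
    rw [abs_of_nonneg (sub_nonneg.2 hx.1)]
    linarith [hcubic x hx, neg_abs_le (f x), pow_nonneg (sub_nonneg.2 hx.1) 3]
  have hconvex : ConvexOn ℝ (Icc m t) f := by
    refine convexOn_of_hasDerivWithinAt2_nonneg (f' := f') (f'' := f'') (convex_Icc m t)
      (fun y hy => (hf y (hsub_right hy)).continuousAt.continuousWithinAt)
      (fun y hy => ?_) (fun y hy => ?_) (fun y hy => ?_) <;> rw [interior_Icc] at hy
    · exact (hf y (hsub_right (Ioo_subset_Icc_self hy))).hasDerivWithinAt
    · exact (hf' y (hsub_right (Ioo_subset_Icc_self hy))).hasDerivWithinAt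
    · exact hconv y (Ioo_subset_Icc_self hy)
  have hright : RootsStableOn f (Icc m t) 2 := by
    rcases lt_or_ge (f t) 0 with hft | hft
    · refine RootsStableOn.of_forall_le_abs (lt_min (neg_pos.2 hfm) (neg_pos.2 hft))
        fun x hx => ?_
      have := hconvex.le_on_segment (left_mem_Icc.2 hmt.le) (right_mem_Icc.2 hmt.le)
        (by rwa [segment_eq_Icc hmt.le])
      rw [min_neg_neg]
      linarith [neg_le_abs (f x)]
    · obtain ⟨x₁, hx₁, hfx₁⟩ := intermediate_value_Icc hmt.le
        (fun y hy => (hf y (hsub_right hy)).continuousAt.continuousWithinAt) ⟨hfm.le, hft⟩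
      exact (RootsStableOn.of_mul_abs_sub_le (div_pos (neg_pos.2 hfm) (sub_pos.2 hmt)) hx₁ hfx₁
        (hconvex.mul_abs_sub_le_abs hfm hx₁ hfx₁)).mono_const one_le_two
  rw [← Icc_union_Icc_eq_Icc hsm.le hmt.le]
  exact hleft.union hright

end TwoSided

/-- `q log q` is the derivative of `u ↦ h (exp u)` at `u = log q`: this is the gap between `h`
and its tangent at `q` in the variable `log x`. -/
def logTangentGap (q x : ℝ) : ℝ := hfun x - hfun q - q * log q * (log x - log q)

section LogTangentGap

variable {q : ℝ}

lemma logTangentGap_self : logTangentGap q q = 0 := by simp [logTangentGap]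

lemma hasDerivAt_logTangentGap {x : ℝ} (hx : 0 < x) :
    HasDerivAt (logTangentGap q) (log x - q * log q / x) x := by
  refine (((((hasDerivAt_id' x).mul (hasDerivAt_log hx.ne')).sub (hasDerivAt_id' x)).add_const
    1).sub_const (hfun q)).sub (((hasDerivAt_log hx.ne').sub_const (log q)).const_mul
    (q * log q)) |>.congr_deriv ?_
  rw [mul_inv_cancel₀ hx.ne', div_eq_mul_inv]
  ring

lemma hasDerivAt_deriv_logTangentGap {x : ℝ} (hx : 0 < x) :
    HasDerivAt (fun y => log y - q * log q / y) ((x + q * log q) / x ^ 2) x := by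
  refine (hasDerivAt_log hx.ne').sub ((hasDerivAt_inv hx.ne').const_mul (q * log q))
    |>.congr_deriv ?_
  field_simp
  ring

lemma deriv_logTangentGap_self (hq : 0 < q) : log q - q * log q / q = 0 := by
  rw [mul_div_cancel_left₀ _ hq.ne', sub_self]

lemma neg_mul_log_mem_Ioo (hq : q ∈ Ioo 0 1) : -(q * log q) ∈ Ioo 0 1 := by
  refine ⟨neg_pos.2 (mul_log_neg hq.1 hq.2), ?_⟩
  linarith [self_sub_one_le_mul_log hq.1.le, hq.1]

lemma le_deriv2_logTangentGap {y : ℝ} (hy : y ∈ Ioc 0 1) (h : -(q * log q) ≤ y) :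
    y + q * log q ≤ (y + q * log q) / y ^ 2 :=
  le_div_self (by linarith) (pow_pos hy.1 2) (pow_le_one₀ hy.1.le hy.2)

lemma deriv2_logTangentGap_le {y : ℝ} (hy : y ∈ Ioc 0 1) (h : y ≤ -(q * log q)) :
    (y + q * log q) / y ^ 2 ≤ y + q * log q := by
  have := le_div_self (neg_nonneg.2 (by linarith : y + q * log q ≤ 0)) (pow_pos hy.1 2)
    (pow_le_one₀ hy.1.le hy.2)
  rw [neg_div] at this
  linarith

lemma rootsStableOn_logTangentGap_Icc_right (hq : q ∈ Ioo 0 1) :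
    RootsStableOn (logTangentGap q) (Icc q 1) 2 := by
  have hpos : ∀ y ∈ Icc q 1, y ∈ Ioc 0 1 := fun y hy => ⟨hq.1.trans_le hy.1, hy.2⟩
  have hG := fun y hy => hasDerivAt_logTangentGap (q := q) (hpos y hy).1
  have hG' := fun y hy => hasDerivAt_deriv_logTangentGap (q := q) (hpos y hy).1
  rcases le_or_gt (-(q * log q)) q with h | h
  · refine rootsStableOn_of_sub_le_deriv2 hG hG' hq.2.le logTangentGap_self
      (deriv_logTangentGap_self hq.1) fun y hy => ?_
    linarith [le_deriv2_logTangentGap (hpos y hy) (h.trans hy.1)]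
  · refine rootsStableOn_of_concave_convex hG hG' h (neg_mul_log_mem_Ioo hq).2 logTangentGap_self
      (deriv_logTangentGap_self hq.1) (fun y hy => ?_) (fun y hy => ?_)
    · have hy1 : y ≤ 1 := hy.2.trans (neg_mul_log_mem_Ioo hq).2.le
      linarith [deriv2_logTangentGap_le (hpos y ⟨hy.1, hy1⟩) hy.2]
    · linarith [le_deriv2_logTangentGap (hpos y ⟨h.le.trans hy.1, hy.2⟩) hy.1, hy.1]

lemma rootsStableOn_logTangentGap_Icc_left (hq : q ∈ Ioo 0 1) {c : ℝ} (hc : 0 < c)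
    (hca : c < -(q * log q)) (hcq : c ≤ q) : RootsStableOn (logTangentGap q) (Icc c q) 2 := by
  have hpos : ∀ y ∈ Icc (-q) (-c), -y ∈ Ioc 0 1 :=
    fun y hy => ⟨by linarith [hy.2], by linarith [hy.1, hq.2]⟩
  rw [← neg_neg (Icc c q), neg_Icc]
  refine RootsStableOn.of_neg_comp_neg ?_
  have hF : ∀ y ∈ Icc (-q) (-c), HasDerivAt (fun x => -logTangentGap q (-x))
      (log (-y) - q * log q / -y) y := fun y hy =>
    (hasDerivAt_logTangentGap (hpos y hy).1).comp_neg.fun_neg.congr_deriv (neg_neg _)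
  have hF' : ∀ y ∈ Icc (-q) (-c), HasDerivAt (fun x => log (-x) - q * log q / -x)
      (-((-y + q * log q) / (-y) ^ 2)) y :=
    fun y hy => (hasDerivAt_deriv_logTangentGap (hpos y hy).1).comp_neg
  have hFs : -logTangentGap q (-(-q)) = 0 := by simp [logTangentGap_self]
  have hF's : log (-(-q)) - q * log q / -(-q) = 0 := by simpa using deriv_logTangentGap_self hq.1
  rcases le_or_gt q (-(q * log q)) with h | h
  · refine rootsStableOn_of_sub_le_deriv2 hF hF' (neg_le_neg hcq) hFs hF's fun y hy => ?_
    linarith [deriv2_logTangentGap_le (q := q) (hpos y hy) (by linarith [hy.1])]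
  · refine rootsStableOn_of_concave_convex hF hF' (m := q * log q) (by linarith) (by linarith)
      hFs hF's (fun y hy => ?_) (fun y hy => ?_)
    · linarith [le_deriv2_logTangentGap (q := q) (hpos y ⟨hy.1, hy.2.trans (by linarith)⟩)
        (by linarith [hy.2])]
    · have hqy : -q ≤ y := by linarith [hy.1]
      linarith [deriv2_logTangentGap_le (q := q) (hpos y ⟨hqy, hy.2⟩) (by linarith [hy.1]), hy.1]

lemma one_le_abs_logTangentGap (hq : q ∈ Ioo 0 1) {x : ℝ} (hx : x ∈ Ioc 0 1)
    (hxc : x ≤ q * exp (2 / (q * log q))) : 1 ≤ |logTangentGap q x| := by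
  have hql : q * log q < 0 := mul_log_neg hq.1 hq.2
  have hlog : log x - log q ≤ 2 / (q * log q) := by
    have := log_le_log hx.1 hxc
    rw [log_mul hq.1.ne' (exp_pos _).ne', log_exp] at this
    linarith
  have hgap : -(q * log q) * (log x - log q) ≤ -2 := by
    have := mul_le_mul_of_nonneg_left hlog (neg_nonneg.2 hql.le)
    rwa [neg_mul, neg_mul, mul_div_cancel₀ _ hql.ne, ← neg_mul] at this
  have hhx := mul_log_nonpos hx.1.le hx.2
  have hhq := self_sub_one_le_mul_log hq.1.le
  rw [le_abs]; right
  unfold logTangentGap hfun; linarith [hx.1]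

lemma rootsStableOn_logTangentGap (hq : q ∈ Ioo 0 1) :
    RootsStableOn (logTangentGap q) (Ioc 0 1) 2 := by
  have hql : q * log q < 0 := mul_log_neg hq.1 hq.2
  set c₀ := q * exp (2 / (q * log q))
  have hc₀q : c₀ ≤ q := mul_le_of_le_one_right hq.1.le
    (exp_le_one_iff.2 (div_nonpos_of_nonneg_of_nonpos zero_le_two hql.le))
  have hc : 0 < min c₀ (-(q * log q) / 2) := lt_min (mul_pos hq.1 (exp_pos _)) (by linarith)
  have hnear0 : RootsStableOn (logTangentGap q) (Ioc 0 (min c₀ (-(q * log q) / 2))) 2 :=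
    RootsStableOn.of_forall_le_abs one_pos fun x hx =>
      have hxc₀ : x ≤ c₀ := hx.2.trans (min_le_left _ _)
      one_le_abs_logTangentGap hq ⟨hx.1, by linarith [hq.2]⟩ hxc₀
  have hleft := rootsStableOn_logTangentGap_Icc_left hq hc
    ((min_le_right _ _).trans_lt (by linarith)) ((min_le_left _ _).trans hc₀q)
  rw [← Ioc_union_Icc_eq_Ioc hq.1 hq.2.le,
    ← Ioc_union_Icc_eq_Ioc hc ((min_le_left _ _).trans hc₀q)]
  exact (hnear0.union hleft).union (rootsStableOn_logTangentGap_Icc_right hq)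

end LogTangentGap

/-- approximate solutions of the tangent-line equation are close to
exact solutions. -/
theorem statement13 (q : ℝ) (hq : q ∈ Set.Ioo (0:ℝ) 1) :
    ∃ C ε0 : ℝ, 0 < C ∧ 0 < ε0 ∧ ∀ ε : ℝ, ε ∈ Set.Ioo (0:ℝ) ε0 →
      ∀ x : ℝ, x ∈ Set.Ioc (0:ℝ) 1 →
        |hfun x - hfun q - q * Real.log q * (Real.log x - Real.log q)| ≤ ε ^ 3 →
        ∃ x0 : ℝ, x0 ∈ Set.Ioc (0:ℝ) 1 ∧
          hfun x0 = hfun q + q * Real.log q * (Real.log x0 - Real.log q) ∧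
          |x - x0| ≤ C * ε := by
  obtain ⟨δ, hδ, hstable⟩ := rootsStableOn_logTangentGap hq
  refine ⟨2, δ, two_pos, hδ, fun ε hε x hx hgap => ?_⟩
  obtain ⟨x₀, hx₀, hroot, hdist⟩ := hstable ε hε x hx hgap
  refine ⟨x₀, hx₀, ?_, hdist⟩
  unfold logTangentGap at hroot
  linarith

end LowerTails
end
end

section
/- For every ε > 0 there exists p_0 ∈ (0,1) such that for all p ∈ (0, p_0) and all x ∈ [0,1]: |p^{−1}·i_p(p·x) − h(x)| < ε. In other words, p^{−1}·i_p(p·x) converges to h(x) uniformly on [0,1] as p → 0⁺. -/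
open scoped BigOperators

attribute [local instance] Classical.propDecidable

noncomputable section

/-
Put `y = 1 - p x` and `z = 1 - p`, so that `y - z = p (1 - x)`. Then
`p⁻¹ i_p(p x) - h(x) = p⁻¹ y log (y / z) - (1 - x)`, and the elementary bounds
`1 - z / y ≤ log (y / z) ≤ y / z - 1` squeeze this between `0` and `p (1 - x)² / (1 - p)`.
-/

lemma sub_le_mul_log_div {y z : ℝ} (hy : 0 < y) (hz : 0 < z) :
    y - z ≤ y * Real.log (y / z) := by
  have h := Real.one_sub_inv_le_log_of_pos (div_pos hy hz)
  calc y - z = y * (1 - (y / z)⁻¹) := by field_simp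
    _ ≤ y * Real.log (y / z) := by gcongr

lemma mul_log_div_le {y z : ℝ} (hy : 0 < y) (hz : 0 < z) :
    y * Real.log (y / z) ≤ y * (y - z) / z := by
  have h := Real.log_le_sub_one_of_pos (div_pos hy hz)
  calc y * Real.log (y / z) ≤ y * (y / z - 1) := by gcongr
    _ = y * (y - z) / z := by field_simp

namespace LowerTails

lemma inv_mul_ip_mul_sub_hfun {p : ℝ} (hp : p ≠ 0) (x : ℝ) :
    p⁻¹ * ip p (p * x) - hfun x =
      p⁻¹ * ((1 - p * x) * Real.log ((1 - p * x) / (1 - p))) - (1 - x) := by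
  unfold ip hfun
  rw [mul_div_cancel_left₀ x hp]
  field_simp
  ring

lemma abs_inv_mul_ip_mul_sub_hfun_le {p x : ℝ} (hp : p ∈ Set.Ioo 0 1) (hx : x ∈ Set.Icc 0 1) :
    |p⁻¹ * ip p (p * x) - hfun x| ≤ p / (1 - p) := by
  obtain ⟨hp0, hp1⟩ := hp
  obtain ⟨hx0, hx1⟩ := hx
  rw [inv_mul_ip_mul_sub_hfun hp0.ne']
  have hz : 0 < 1 - p := by linarith
  have hy : 0 < 1 - p * x := by nlinarith
  have hyz : (1 - p * x) - (1 - p) = p * (1 - x) := by ring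
  have hlower : 0 ≤ p⁻¹ * ((1 - p * x) * Real.log ((1 - p * x) / (1 - p))) - (1 - x) := by
    have h := sub_le_mul_log_div hy hz
    rw [hyz] at h
    calc (0 : ℝ) = p⁻¹ * (p * (1 - x)) - (1 - x) := by field_simp; ring
      _ ≤ _ := by gcongr
  have hupper : p⁻¹ * ((1 - p * x) * Real.log ((1 - p * x) / (1 - p))) - (1 - x) ≤
      p * (1 - x) ^ 2 / (1 - p) := by
    have h := mul_log_div_le hy hz
    rw [hyz] at h
    calc p⁻¹ * ((1 - p * x) * Real.log ((1 - p * x) / (1 - p))) - (1 - x)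
        ≤ p⁻¹ * ((1 - p * x) * (p * (1 - x)) / (1 - p)) - (1 - x) := by gcongr
      _ = p * (1 - x) ^ 2 / (1 - p) := by field_simp; ring
  rw [abs_of_nonneg hlower]
  calc _ ≤ p * (1 - x) ^ 2 / (1 - p) := hupper
    _ ≤ p / (1 - p) := by
      gcongr
      exact mul_le_of_le_one_right hp0.le (pow_le_one₀ (by linarith) (by linarith))

/-- `p⁻¹ i_p(p x) → h(x)` uniformly on `[0, 1]` as `p → 0⁺`. -/
theorem statement14 (ε : ℝ) (hε : 0 < ε) :
    ∃ p0 : ℝ, p0 ∈ Set.Ioo (0:ℝ) 1 ∧ ∀ p : ℝ, p ∈ Set.Ioo (0:ℝ) p0 →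
      ∀ x : ℝ, x ∈ Set.Icc (0:ℝ) 1 → |p⁻¹ * ip p (p * x) - hfun x| < ε := by
  refine ⟨min (ε / 2) (1 / 2), ⟨by positivity, by linarith [min_le_right (ε / 2) (1 / 2)]⟩, ?_⟩
  rintro p ⟨hp0, hpmin⟩ x hx
  have hpε : p < ε / 2 := hpmin.trans_le (min_le_left _ _)
  have hphalf : p < 1 / 2 := hpmin.trans_le (min_le_right _ _)
  calc |p⁻¹ * ip p (p * x) - hfun x| ≤ p / (1 - p) :=
        abs_inv_mul_ip_mul_sub_hfun_le ⟨hp0, by linarith⟩ hx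
    _ ≤ 2 * p := by rw [div_le_iff₀ (by linarith)]; nlinarith
    _ < ε := by linarith

end LowerTails
end
end

section
/- Let H be a nonempty finite graph, fix n ≥ v(H) and η ∈ [0,1]. Then lim_{p→0⁺} p^{−1}·Φ_p(H,η) = Φ(H,η). -/
open scoped BigOperators

attribute [local instance] Classical.propDecidable

noncomputable section

/-!
Substituting `q = p • x`, the expected count `E[N_H(q)] = ∑_{copies A} ∏_{e ∈ A} q_e` is
homogeneous of degree `e(H)` in `q`, so the constraint of `Φ_p(H, η)` for `p • x` is exactly
the constraint of `Φ(H, η)` for `x`. Writing `h = klFun`, one has the exact identity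
`i_p(p t) = p h(t) + (1 - p) h((1 - p t) / (1 - p))`, whose last term lies in `[0, 2 p²]` for
`t ∈ [0, 1]`, `p ≤ 1/2`. Conversely, lowering the coordinates of a feasible `q` that exceed `p`
down to `p` keeps it feasible (the count is monotone) and does not increase `i_p(q)`, so every
feasible `q` may be taken of the form `p • x` with `x ∈ [0, 1]`. Hence
`|Φ_p(H, η) - p Φ(H, η)| ≤ 2 p² |E(K_n)|`, uniformly in `H` and `η`.
-/

open InformationTheory Finset Filter Topology

namespace LowerTails

variable {k n : ℕ}

def topCopies (H : SimpleGraph (Fin k)) (n : ℕ) : Finset (⊤ : SimpleGraph (Fin n)).Subgraph :=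
  {K | Nonempty (H ≃g K.coe)}

def edgesOf (K : (⊤ : SimpleGraph (Fin n)).Subgraph) : Finset (Edge n) :=
  {e | e.1 ∈ K.edgeSet}

lemma card_edgesOf (K : (⊤ : SimpleGraph (Fin n)).Subgraph) :
    #(edgesOf K) = K.edgeSet.ncard := by
  have himg : Subtype.val '' (edgesOf K : Set (Edge n)) = K.edgeSet := by
    ext s
    simp only [edgesOf, coe_filter, mem_univ, true_and, Set.mem_image, Set.mem_ofPred_eq]
    constructor
    · rintro ⟨e, he, rfl⟩
      exact he
    · intro hs
      exact ⟨⟨s, SimpleGraph.not_isDiag_of_mem_edgeSet _ (K.edgeSet_subset hs)⟩, hs, rfl⟩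
  rw [← himg, Set.ncard_image_of_injective _ Subtype.val_injective, Set.ncard_coe_finset]

lemma card_edgesOf_of_mem_topCopies {H : SimpleGraph (Fin k)}
    {K : (⊤ : SimpleGraph (Fin n)).Subgraph} (hK : K ∈ topCopies H n) :
    #(edgesOf K) = H.edgeSet.ncard := by
  obtain ⟨e⟩ := (mem_filter.mp hK).2
  rw [card_edgesOf, ← K.image_coe_edgeSet_coe,
    Set.ncard_image_of_injective _ (Sym2.map.injective Subtype.val_injective),
    ← Nat.card_coe_set_eq, ← Nat.card_coe_set_eq, Nat.card_congr e.mapEdgeSet]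

lemma NHKn_eq_card (H : SimpleGraph (Fin k)) (n : ℕ) : NHKn H n = #(topCopies H n) := by
  rw [NHKn, countCopies, ← Set.ncard_coe_finset, topCopies, coe_filter]
  simp

lemma toSG_adj (G : EGraph n) (u v : Fin n) :
    (toSG G).Adj u v ↔ ∃ h : ¬ s(u, v).IsDiag, G ⟨s(u, v), h⟩ = true := by
  rw [toSG, SimpleGraph.fromEdgeSet_adj]
  exact ⟨fun h => h.1, fun h => ⟨h, by simpa using h.1⟩⟩

def toTopSubgraph (G : EGraph n) (K : (toSG G).Subgraph) :
    (⊤ : SimpleGraph (Fin n)).Subgraph where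
  verts := K.verts
  Adj := K.Adj
  adj_sub h := (K.adj_sub h).ne
  edge_vert := K.edge_vert
  symm := K.symm

lemma toTopSubgraph_injective (G : EGraph n) : Function.Injective (toTopSubgraph G) := by
  intro K L h
  have hv : K.verts = L.verts := congrArg (·.verts) h
  have ha : K.Adj = L.Adj := congrArg (·.Adj) h
  ext v w
  · rw [hv]
  · rw [ha]

lemma range_toTopSubgraph (G : EGraph n) :
    Set.range (toTopSubgraph G) = {L | ∀ e ∈ edgesOf L, G e = true} := by
  ext L
  constructor
  · rintro ⟨K, rfl⟩ ⟨s, hs⟩ he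
    induction s with
    | _ u v =>
      obtain ⟨_, hG⟩ := (toSG_adj G u v).mp (K.adj_sub (mem_filter.mp he).2)
      exact hG
  · intro hL
    refine ⟨⟨L.verts, L.Adj, fun {u v} h => ?_, L.edge_vert, L.symm⟩, rfl⟩
    have hnd : ¬ s(u, v).IsDiag := by simpa using (L.adj_sub h).ne
    exact (toSG_adj G u v).mpr ⟨hnd, hL ⟨_, hnd⟩ (mem_filter.mpr ⟨mem_univ _, h⟩)⟩

lemma NH_eq_card (H : SimpleGraph (Fin k)) (G : EGraph n) :
    NH H G = #{K ∈ topCopies H n | ∀ e ∈ edgesOf K, G e = true} := by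
  have hpre : {K : (toSG G).Subgraph | Nonempty (H ≃g K.coe)} =
      toTopSubgraph G ⁻¹' {L | Nonempty (H ≃g L.coe)} := rfl
  rw [NH, countCopies, hpre, ← Set.ncard_image_of_injective _ (toTopSubgraph_injective G),
    Set.image_preimage_eq_inter_range, range_toTopSubgraph, ← Set.ncard_coe_finset]
  congr 2
  ext L
  simp [topCopies]

lemma sum_wt_filter_forall_mem (q : Edge n → ℝ) (A : Finset (Edge n)) :
    ∑ G : EGraph n with ∀ e ∈ A, G e = true, wt q G = ∏ e ∈ A, q e := by
  let f : (e : Edge n) → Bool → ℝ := fun e b =>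
    if b then q e else if e ∈ A then 0 else 1 - q e
  have hterm (G : EGraph n) :
      (if ∀ e ∈ A, G e = true then wt q G else 0) = ∏ e, f e (G e) := by
    split_ifs with hG
    · exact prod_congr rfl fun e _ => by by_cases he : e ∈ A <;> simp [f, he, hG]
    · obtain ⟨e, he, hGe⟩ : ∃ e ∈ A, G e = false := by simpa using hG
      exact (prod_eq_zero (mem_univ e) (by simp [f, he, hGe])).symm
  have hmarg (e : Edge n) : ∑ b, f e b = if e ∈ A then q e else 1 := by
    by_cases he : e ∈ A <;> simp [f, he]
  rw [sum_filter, sum_congr rfl fun G _ => hterm G, ← Fintype.prod_sum,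
    prod_congr rfl fun e _ => hmarg e, prod_ite_mem, univ_inter]

lemma expNH_eq_sum_prod (H : SimpleGraph (Fin k)) (q : Edge n → ℝ) :
    expNH H q = ∑ K ∈ topCopies H n, ∏ e ∈ edgesOf K, q e := by
  simp_rw [expNH, NH_eq_card, card_filter, Nat.cast_sum, mul_sum, Nat.cast_ite, Nat.cast_one,
    Nat.cast_zero, mul_boole]
  rw [sum_comm]
  refine sum_congr rfl fun K _ => ?_
  rw [← sum_filter, sum_wt_filter_forall_mem]

lemma expNH_mono (H : SimpleGraph (Fin k)) {q q' : Edge n → ℝ}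
    (h0 : ∀ e, 0 ≤ q e) (hle : ∀ e, q e ≤ q' e) : expNH H q ≤ expNH H q' := by
  simp only [expNH_eq_sum_prod]
  exact sum_le_sum fun K _ => prod_le_prod (fun e _ => h0 e) fun e _ => hle e

lemma expNH_const_mul (H : SimpleGraph (Fin k)) (p : ℝ) (x : Edge n → ℝ) :
    expNH H (fun e => p * x e) = p ^ H.edgeSet.ncard * expNH H x := by
  simp only [expNH_eq_sum_prod, mul_sum]
  refine sum_congr rfl fun K hK => ?_
  rw [prod_mul_distrib, prod_const, card_edgesOf_of_mem_topCopies hK]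

lemma expNH_const (H : SimpleGraph (Fin k)) (p : ℝ) :
    expNH H (fun _ : Edge n => p) = p ^ H.edgeSet.ncard * NHKn H n := by
  simpa [NHKn_eq_card, expNH_eq_sum_prod] using expNH_const_mul H p (fun _ : Edge n => 1)

lemma expNH_const_mul_le_iff (H : SimpleGraph (Fin k)) {p : ℝ} (hp : 0 < p) (η : ℝ)
    (x : Edge n → ℝ) :
    expNH H (fun e => p * x e) ≤ η * expNH H (fun _ : Edge n => p) ↔
      expNH H x ≤ η * NHKn H n := by
  rw [expNH_const_mul, expNH_const, mul_left_comm, mul_le_mul_iff_right₀ (pow_pos hp _)]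

lemma hfun_eq_klFun : hfun = klFun := by
  ext x; rw [hfun, klFun]; ring

lemma klFun_le_sq_sub_one {y : ℝ} (hy : 0 ≤ y) : klFun y ≤ (y - 1) ^ 2 := by
  rcases hy.eq_or_lt with rfl | hy
  · simp [klFun]
  · have := mul_le_mul_of_nonneg_left (Real.log_le_sub_one_of_pos hy) hy.le
    rw [klFun]; nlinarith

lemma ip_mul_eq {p : ℝ} (hp0 : p ≠ 0) (hp1 : p ≠ 1) (t : ℝ) :
    ip p (p * t) = p * klFun t + (1 - p) * klFun ((1 - p * t) / (1 - p)) := by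
  have h1p : 1 - p ≠ 0 := sub_ne_zero.mpr (Ne.symm hp1)
  rw [ip, klFun, klFun, mul_div_cancel_left₀ t hp0]
  field_simp
  ring

lemma ip_nonneg {p t : ℝ} (hp0 : 0 < p) (hp1 : p < 1) (ht0 : 0 ≤ t) (ht1 : t ≤ 1) :
    0 ≤ ip p t := by
  have h := ip_mul_eq hp0.ne' hp1.ne (t / p)
  rw [mul_div_cancel₀ t hp0.ne'] at h
  rw [h]
  exact add_nonneg (mul_nonneg hp0.le (klFun_nonneg (div_nonneg ht0 hp0.le)))
    (mul_nonneg (by linarith) (klFun_nonneg (div_nonneg (by linarith) (by linarith))))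

lemma ip_self {p : ℝ} (hp0 : p ≠ 0) (hp1 : p ≠ 1) : ip p p = 0 := by
  have h1p : 1 - p ≠ 0 := sub_ne_zero.mpr (Ne.symm hp1)
  simpa [div_self h1p, klFun_one] using ip_mul_eq hp0 hp1 1

lemma mul_klFun_le_ip_mul {p t : ℝ} (hp0 : 0 < p) (hp1 : p < 1) (ht : p * t ≤ 1) :
    p * klFun t ≤ ip p (p * t) := by
  rw [ip_mul_eq hp0.ne' hp1.ne]
  have := klFun_nonneg (div_nonneg (sub_nonneg.mpr ht) (sub_nonneg.mpr hp1.le))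
  nlinarith

lemma ip_mul_le {p t : ℝ} (hp0 : 0 < p) (hp : p ≤ 1 / 2) (ht0 : 0 ≤ t) (ht1 : t ≤ 1) :
    ip p (p * t) ≤ p * klFun t + 2 * p ^ 2 := by
  have h1p : 0 < 1 - p := by linarith
  rw [ip_mul_eq hp0.ne' (by linarith)]
  have hsq := klFun_le_sq_sub_one (div_nonneg (by nlinarith : 0 ≤ 1 - p * t) h1p.le)
  have hy : (1 - p) * ((1 - p * t) / (1 - p) - 1) ^ 2 = p ^ 2 * (1 - t) ^ 2 / (1 - p) := by
    field_simp
    ring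
  have hbound : p ^ 2 * (1 - t) ^ 2 / (1 - p) ≤ 2 * p ^ 2 := by
    have : (1 - t) ^ 2 ≤ 2 * (1 - p) := by nlinarith
    rw [div_le_iff₀ h1p]
    nlinarith [mul_le_mul_of_nonneg_left this (sq_nonneg p)]
  nlinarith [mul_le_mul_of_nonneg_left hsq h1p.le]

lemma abs_csInf_sub_mul_csInf_le {S T : Set ℝ} {a c : ℝ} (ha : 0 < a) (hc : 0 ≤ c)
    (hS : BddBelow S) (hT : BddBelow T)
    (hTS : ∀ t ∈ T, ∃ s ∈ S, s ≤ a * t + c)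
    (hST : ∀ s ∈ S, ∃ t ∈ T, a * t - c ≤ s) :
    |sInf S - a * sInf T| ≤ c := by
  rcases T.eq_empty_or_nonempty with rfl | hTne
  -- then `S` is empty too, and both infima take the junk value `sInf ∅ = 0`
  · have : S = ∅ := Set.eq_empty_of_forall_notMem fun s hs => by
      obtain ⟨t, ht, -⟩ := hST s hs; exact ht
    simpa [this] using hc
  obtain ⟨s₀, hs₀, -⟩ := hTS _ hTne.some_mem
  have hSne : S.Nonempty := ⟨s₀, hs₀⟩
  rw [abs_le]
  constructor
  · have : a * sInf T - c ≤ sInf S := le_csInf hSne fun s hs => by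
      obtain ⟨t, ht, hts⟩ := hST s hs
      nlinarith [csInf_le hT ht]
    linarith
  · have : (sInf S - c) / a ≤ sInf T := le_csInf hTne fun t ht => by
      obtain ⟨s, hs, hst⟩ := hTS t ht
      rw [div_le_iff₀ ha]
      nlinarith [csInf_le hS hs]
    rw [div_le_iff₀ ha] at this
    linarith

lemma exists_feasible_Phi_of_feasible_PhiP (H : SimpleGraph (Fin k)) (η : ℝ) {p : ℝ}
    (hp0 : 0 < p) (hp1 : p < 1) {q : Edge n → ℝ} (hq : ∀ e, q e ∈ Set.Icc (0 : ℝ) 1)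
    (hfeas : expNH H q ≤ η * expNH H (fun _ : Edge n => p)) :
    ∃ x : Edge n → ℝ, (∀ e, x e ∈ Set.Icc (0 : ℝ) 1) ∧ expNH H x ≤ η * NHKn H n ∧
      p * ∑ e, hfun (x e) ≤ ∑ e, ip p (q e) := by
  set x : Edge n → ℝ := fun e => min (q e) p / p
  have hpx (e : Edge n) : p * x e = min (q e) p := mul_div_cancel₀ _ hp0.ne'
  have hx (e : Edge n) : x e ∈ Set.Icc (0 : ℝ) 1 :=
    ⟨div_nonneg (le_min (hq e).1 hp0.le) hp0.le,
      div_le_one_of_le₀ (min_le_right _ _) hp0.le⟩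
  refine ⟨x, hx, ?_, ?_⟩
  · refine (expNH_const_mul_le_iff H hp0 η x).mp (le_trans (expNH_mono H ?_ ?_) hfeas)
    · exact fun e => mul_nonneg hp0.le (hx e).1
    · exact fun e => (hpx e).trans_le (min_le_left _ _)
  · rw [mul_sum, hfun_eq_klFun]
    refine sum_le_sum fun e _ => ?_
    have h1 := mul_klFun_le_ip_mul hp0 hp1 ((hpx e).trans_le ((min_le_right _ _).trans hp1.le))
    rw [hpx] at h1
    refine h1.trans ?_
    rcases le_total (q e) p with h | h
    · rw [min_eq_left h]
    · rw [min_eq_right h, ip_self hp0.ne' hp1.ne]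
      exact ip_nonneg hp0 hp1 (hq e).1 (hq e).2

lemma abs_PhiP_sub_mul_Phi_le (H : SimpleGraph (Fin k)) (n : ℕ) (η : ℝ) {p : ℝ}
    (hp0 : 0 < p) (hp : p ≤ 1 / 2) :
    |PhiP H n p η - p * Phi H n η| ≤ 2 * p ^ 2 * Fintype.card (Edge n) := by
  have hp1 : p < 1 := by linarith
  refine abs_csInf_sub_mul_csInf_le hp0 (by positivity) ?_ ?_ ?_ ?_
  · refine ⟨0, ?_⟩
    rintro _ ⟨q, hq, -, rfl⟩
    exact sum_nonneg fun e _ => ip_nonneg hp0 hp1 (hq e).1 (hq e).2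
  · refine ⟨0, ?_⟩
    rintro _ ⟨x, hx, -, rfl⟩
    exact sum_nonneg fun e _ => hfun_eq_klFun ▸ klFun_nonneg (hx e).1
  · rintro _ ⟨x, hx, hfeas, rfl⟩
    refine ⟨_, ⟨fun e => p * x e, fun e => ⟨?_, ?_⟩,
      (expNH_const_mul_le_iff H hp0 η x).mpr hfeas, rfl⟩, ?_⟩
    · exact mul_nonneg hp0.le (hx e).1
    · nlinarith [(hx e).1, (hx e).2]
    · have h := sum_le_sum (s := univ) fun e _ => ip_mul_le hp0 hp (hx e).1 (hx e).2
      rw [sum_add_distrib, ← mul_sum, sum_const, card_univ, nsmul_eq_mul] at h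
      rw [hfun_eq_klFun]
      linarith
  · rintro _ ⟨q, hq, hfeas, rfl⟩
    obtain ⟨x, hx, hfeas', hle⟩ := exists_feasible_Phi_of_feasible_PhiP H η hp0 hp1 hq hfeas
    exact ⟨_, ⟨x, hx, hfeas', rfl⟩, (sub_le_self _ (by positivity)).trans hle⟩

theorem statement15_general {k : ℕ} (H : SimpleGraph (Fin k))
    (n : ℕ) (η : ℝ) :
    Filter.Tendsto (fun p : ℝ => p⁻¹ * PhiP H n p η)
      (nhdsWithin 0 (Set.Ioi 0)) (nhds (Phi H n η)) := by
  set E : ℝ := (Fintype.card (Edge n) : ℝ)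
  have hbound : ∀ᶠ p in 𝓝[>] 0, |p⁻¹ * PhiP H n p η - Phi H n η| ≤ 2 * E * p := by
    filter_upwards [Ioo_mem_nhdsGT (by norm_num : (0 : ℝ) < 1 / 2)] with p ⟨hp0, hp⟩
    have h := abs_PhiP_sub_mul_Phi_le H n η hp0 hp.le
    rw [show p⁻¹ * PhiP H n p η - Phi H n η = p⁻¹ * (PhiP H n p η - p * Phi H n η) by
      field_simp, abs_mul, abs_of_pos (inv_pos.mpr hp0), inv_mul_le_iff₀ hp0]
    linarith
  have hlim : Tendsto (fun p : ℝ => 2 * E * p) (𝓝[>] 0) (𝓝 0) :=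
    ((continuous_const_mul (2 * E)).tendsto' 0 0 (mul_zero _)).mono_left nhdsWithin_le_nhds
  exact tendsto_iff_norm_sub_tendsto_zero.mpr (squeeze_zero' (.of_forall fun _ => norm_nonneg _)
    hbound hlim)

/-- `p⁻¹ Φ_p(H, η) → Φ(H, η)` as `p → 0⁺`. -/
theorem statement15 {k : ℕ} (H : SimpleGraph (Fin k)) (hH : H.edgeSet.Nonempty)
    (n : ℕ) (hn : k ≤ n) (η : ℝ) (hη : η ∈ Set.Icc (0:ℝ) 1) :
    Filter.Tendsto (fun p : ℝ => p⁻¹ * PhiP H n p η)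
      (nhdsWithin 0 (Set.Ioi 0)) (nhds (Phi H n η)) :=
  statement15_general H n η

end LowerTails
end
end

section
/- For every n ≥ 1, every positive integer k, every symmetric matrix M ∈ ℝ^{n×n}, and all vectors x, y ∈ [0,1]^n: |xᵀ·M·y| ≤ n·(Tr(M^{2k}))^{1/(2k)}. In particular Tr(M^{2k}) ≥ 0, and the cut norm satisfies ‖M‖_□ := sup_{x,y ∈ [0,1]^n} (1/n²)·|xᵀMy| ≤ (1/n)·(Tr(M^{2k}))^{1/(2k)}. -/
open scoped BigOperators

attribute [local instance] Classical.propDecidable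

noncomputable section

/-! Diagonalise `M = U D Uᵀ` with `U` orthogonal. Then `xᵀ M y = ∑ λᵢ (Uᵀx)ᵢ (Uᵀy)ᵢ`, so by
Cauchy–Schwarz and the orthogonality of `U`, `|xᵀ M y| ≤ maxᵢ |λᵢ| ‖x‖ ‖y‖ ≤ n maxᵢ |λᵢ|` for
`x, y ∈ [0,1]ⁿ`. Finally `maxᵢ λᵢ^(2k) ≤ ∑ᵢ λᵢ^(2k) = Tr(M^(2k))`. -/

open Matrix


lemma Matrix.transpose_mulVec_dotProduct_transpose_mulVec {ι R : Type*} [Fintype ι] [DecidableEq ι]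
    [CommSemiring R] {U : Matrix ι ι R} (hU : U * Uᵀ = 1) (x y : ι → R) :
    (Uᵀ *ᵥ x) ⬝ᵥ (Uᵀ *ᵥ y) = x ⬝ᵥ y := by
  rw [dotProduct_mulVec, vecMul_transpose, mulVec_mulVec, hU, one_mulVec]

lemma abs_sum_mul_mul_le {ι : Type*} [Fintype ι] {l a b : ι → ℝ} {c : ℝ}
    (hc : ∀ i, |l i| ≤ c) : |∑ i, l i * (a i * b i)| ≤ c * (√(a ⬝ᵥ a) * √(b ⬝ᵥ b)) := by
  rcases isEmpty_or_nonempty ι with hι | ⟨⟨i₀⟩⟩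
  · simp
  have hc0 : 0 ≤ c := (abs_nonneg _).trans (hc i₀)
  calc |∑ i, l i * (a i * b i)| ≤ ∑ i, |l i| * (|a i| * |b i|) := by
        simpa only [abs_mul] using Finset.abs_sum_le_sum_abs (fun i ↦ l i * (a i * b i)) _
    _ ≤ c * ∑ i, |a i| * |b i| := by
        rw [Finset.mul_sum]
        gcongr with i
        exact hc i
    _ ≤ c * (√(a ⬝ᵥ a) * √(b ⬝ᵥ b)) := by
        gcongr
        refine (Real.sum_mul_le_sqrt_mul_sqrt _ _ _).trans_eq ?_
        simp only [sq_abs, dotProduct, ← sq]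

namespace Matrix.IsHermitian
variable {ι : Type*} [Fintype ι] [DecidableEq ι]

lemma trace_pow_eq_sum_eigenvalues_pow {𝕜 : Type*} [RCLike 𝕜] {A : Matrix ι ι 𝕜}
    (hA : A.IsHermitian) (m : ℕ) : (A ^ m).trace = ∑ i, (hA.eigenvalues i : 𝕜) ^ m := by
  rw [← cfc_pow_id (R := ℝ) A m hA.isSelfAdjoint, hA.cfc_eq, IsHermitian.cfc,
    Unitary.conjStarAlgAut_apply, trace_mul_cycle, Unitary.coe_star_mul_self, one_mul,
    trace_diagonal]
  simp

variable {A : Matrix ι ι ℝ} (hA : A.IsHermitian)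
include hA

lemma trace_pow_two_mul_nonneg (k : ℕ) : 0 ≤ (A ^ (2 * k)).trace := by
  rw [hA.trace_pow_eq_sum_eigenvalues_pow]
  exact Finset.sum_nonneg fun i _ ↦ (even_two_mul k).pow_nonneg _

lemma abs_eigenvalues_le_trace_pow_two_mul_rpow {k : ℕ} (hk : k ≠ 0) (i : ι) :
    |hA.eigenvalues i| ≤ (A ^ (2 * k)).trace ^ ((1 : ℝ) / (2 * k)) := by
  have hpow : |hA.eigenvalues i| ^ (2 * k) ≤ (A ^ (2 * k)).trace := by
    rw [hA.trace_pow_eq_sum_eigenvalues_pow, (even_two_mul k).pow_abs]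
    exact Finset.single_le_sum (f := fun j ↦ hA.eigenvalues j ^ (2 * k))
      (fun j _ ↦ (even_two_mul k).pow_nonneg _) (Finset.mem_univ i)
  have hexp : (1 : ℝ) / (2 * k) = ((2 * k : ℕ) : ℝ)⁻¹ := by push_cast; rw [one_div]
  calc |hA.eigenvalues i| = (|hA.eigenvalues i| ^ (2 * k)) ^ ((2 * k : ℕ) : ℝ)⁻¹ :=
        (Real.pow_rpow_inv_natCast (abs_nonneg _) (by omega)).symm
    _ ≤ _ := by rw [hexp]; gcongr

lemma eigenvectorUnitary_mul_transpose :
    (hA.eigenvectorUnitary : Matrix ι ι ℝ) * (hA.eigenvectorUnitary : Matrix ι ι ℝ)ᵀ = 1 := by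
  simpa [star_eq_conjTranspose] using Unitary.coe_mul_star_self hA.eigenvectorUnitary

lemma dotProduct_mulVec_eq_sum_eigenvalues (x y : ι → ℝ) :
    x ⬝ᵥ (A *ᵥ y) = ∑ i, hA.eigenvalues i *
      (((hA.eigenvectorUnitary : Matrix ι ι ℝ)ᵀ *ᵥ x) i *
        ((hA.eigenvectorUnitary : Matrix ι ι ℝ)ᵀ *ᵥ y) i) := by
  conv_lhs => rw [hA.spectral_theorem, Unitary.conjStarAlgAut_apply, star_eq_conjTranspose,
    conjTranspose_eq_transpose_of_trivial]
  rw [← mulVec_mulVec, ← mulVec_mulVec, dotProduct_mulVec, ← mulVec_transpose]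
  simp [dotProduct, mulVec_diagonal, mul_left_comm]

lemma abs_dotProduct_mulVec_le {c : ℝ} (hc : ∀ i, |hA.eigenvalues i| ≤ c) (x y : ι → ℝ) :
    |x ⬝ᵥ (A *ᵥ y)| ≤ c * (√(x ⬝ᵥ x) * √(y ⬝ᵥ y)) := by
  rw [hA.dotProduct_mulVec_eq_sum_eigenvalues,
    ← transpose_mulVec_dotProduct_transpose_mulVec hA.eigenvectorUnitary_mul_transpose x x,
    ← transpose_mulVec_dotProduct_transpose_mulVec hA.eigenvectorUnitary_mul_transpose y y]
  exact abs_sum_mul_mul_le hc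

end Matrix.IsHermitian

lemma dotProduct_self_le_card {ι : Type*} [Fintype ι] {x : ι → ℝ}
    (hx : ∀ i, x i ∈ Set.Icc (0 : ℝ) 1) : x ⬝ᵥ x ≤ Fintype.card ι := by
  calc x ⬝ᵥ x = ∑ i, x i * x i := rfl
    _ ≤ ∑ _i : ι, (1 : ℝ) := by
        gcongr with i
        exact mul_le_one₀ (hx i).2 (hx i).1 (hx i).2
    _ = Fintype.card ι := by simp

namespace LowerTails

lemma cutNorm_le_of_forall_abs_le {n : ℕ} {M : Matrix (Fin n) (Fin n) ℝ} {c : ℝ} (hc : 0 ≤ c)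
    (h : ∀ x y : Fin n → ℝ, (∀ i, x i ∈ Set.Icc (0 : ℝ) 1) → (∀ i, y i ∈ Set.Icc (0 : ℝ) 1) →
      |∑ i, ∑ j, x i * M i j * y j| ≤ n * c) :
    cutNorm M ≤ 1 / n * c := by
  refine Real.sSup_le ?_ (by positivity)
  rintro _ ⟨x, y, hx, hy, rfl⟩
  calc |∑ i, ∑ j, x i * M i j * y j| / (n : ℝ) ^ 2 ≤ n * c / (n : ℝ) ^ 2 := by
        gcongr
        exact h x y hx hy
    _ = 1 / n * c := by rw [sq, mul_div_right_comm, div_self_mul_self', one_div]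

theorem statement16_general (n k : ℕ) (hk : 1 ≤ k)
    (M : Matrix (Fin n) (Fin n) ℝ) (hM : M.IsSymm) :
    0 ≤ Matrix.trace (M ^ (2 * k)) ∧
    (∀ x y : Fin n → ℝ, (∀ i, x i ∈ Set.Icc (0:ℝ) 1) → (∀ i, y i ∈ Set.Icc (0:ℝ) 1) →
      |∑ i : Fin n, ∑ j : Fin n, x i * M i j * y j| ≤
        (n : ℝ) * (Matrix.trace (M ^ (2 * k))) ^ ((1 : ℝ) / (2 * k))) ∧
    cutNorm M ≤ (1 / (n : ℝ)) * (Matrix.trace (M ^ (2 * k))) ^ ((1 : ℝ) / (2 * k)) := by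
  have hH : M.IsHermitian := Matrix.isHermitian_iff_isSymm.mpr hM
  have hT := hH.trace_pow_two_mul_nonneg k
  have hbilin : ∀ x y : Fin n → ℝ, (∀ i, x i ∈ Set.Icc (0:ℝ) 1) →
      (∀ i, y i ∈ Set.Icc (0:ℝ) 1) → |∑ i : Fin n, ∑ j : Fin n, x i * M i j * y j| ≤
        (n : ℝ) * (Matrix.trace (M ^ (2 * k))) ^ ((1 : ℝ) / (2 * k)) := by
    intro x y hx hy
    have hxy : ∑ i, ∑ j, x i * M i j * y j = x ⬝ᵥ (M *ᵥ y) := by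
      simp only [dotProduct, mulVec, Finset.mul_sum, mul_assoc]
    have heig := hH.abs_eigenvalues_le_trace_pow_two_mul_rpow (by omega : k ≠ 0)
    calc |∑ i, ∑ j, x i * M i j * y j|
        ≤ (M ^ (2 * k)).trace ^ ((1 : ℝ) / (2 * k)) * (√(x ⬝ᵥ x) * √(y ⬝ᵥ y)) :=
          hxy ▸ hH.abs_dotProduct_mulVec_le heig x y
      _ ≤ (M ^ (2 * k)).trace ^ ((1 : ℝ) / (2 * k)) * (√n * √n) := by
          gcongr
          · simpa using dotProduct_self_le_card hx
          · simpa using dotProduct_self_le_card hy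
      _ = n * (M ^ (2 * k)).trace ^ ((1 : ℝ) / (2 * k)) := by
          rw [Real.mul_self_sqrt n.cast_nonneg, mul_comm]
  exact ⟨hT, hbilin, cutNorm_le_of_forall_abs_le (Real.rpow_nonneg hT _) hbilin⟩

/-- bilinear forms of a symmetric matrix against `[0,1]`-vectors are
controlled by traces of even powers, hence so is the cut norm. -/
theorem statement16 (n k : ℕ) (hn : 1 ≤ n) (hk : 1 ≤ k)
    (M : Matrix (Fin n) (Fin n) ℝ) (hM : M.IsSymm) :
    0 ≤ Matrix.trace (M ^ (2 * k)) ∧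
    (∀ x y : Fin n → ℝ, (∀ i, x i ∈ Set.Icc (0:ℝ) 1) → (∀ i, y i ∈ Set.Icc (0:ℝ) 1) →
      |∑ i : Fin n, ∑ j : Fin n, x i * M i j * y j| ≤
        (n : ℝ) * (Matrix.trace (M ^ (2 * k))) ^ ((1 : ℝ) / (2 * k))) ∧
    cutNorm M ≤ (1 / (n : ℝ)) * (Matrix.trace (M ^ (2 * k))) ^ ((1 : ℝ) / (2 * k)) :=
  statement16_general n k hk M hM

end LowerTails
end
end
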